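/- arXiv:1208.6322 — 7 statements merged into one kernel-verified Lean document; each statement's English description precedes it below -/
import Mathlib

section
/- The matrix D with rows indexed by the disjoint union K ⊔ K ⊔ J and columns indexed by J × K, whose entry in a row k of the first copy of K and column (j, k') equals −1 if k = k' and 0 otherwise, whose entry in a row k of the second copy of K and column (j, k') equals 1 if k = k' and 0 otherwise, and whose entry in row j' ∈ J and column (j, k) equals 1 if j = j' and 0 otherwise, is totally unimodular. -/
/-- The bipartite incidence matrix is totally unimodular. -/
lemma aux_incidence_TU (n : ℕ) (κ : Type) [DecidableEq κ] :
    (Matrix.of (fun r : κ ⊕ Fin n => fun c : Fin n × κ =>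
      match r with
      | Sum.inl k => if k = c.2 then (1 : ℝ) else 0
      | Sum.inr j' => if j' = c.1 then (1 : ℝ) else 0)).IsTotallyUnimodular := by
  set E : Matrix (κ ⊕ Fin n) (Fin n × κ) ℝ := Matrix.of (fun r c =>
      match r with
      | Sum.inl k => if k = c.2 then (1 : ℝ) else 0
      | Sum.inr j' => if j' = c.1 then (1 : ℝ) else 0) with hE
  rw [Matrix.isTotallyUnimodular_iff]
  intro k
  induction k with
  | zero => intro f g; exact ⟨1, by simp⟩
  | succ k ih =>
    intro f g
    by_cases hf : Function.Injective f
    · by_cases hall : ∀ x : Fin (k+1),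
        (∃ i, f i = Sum.inl (g x).2) ∧ (∃ i, f i = Sum.inr (g x).1)
      · -- every column has two nonzeros: rows are linearly dependent
        refine ⟨0, ?_⟩
        rw [SignType.coe_zero, eq_comm, ← Matrix.exists_vecMul_eq_zero_iff]
        refine ⟨fun i => if (f i).isLeft then 1 else -1, ?_, ?_⟩
        · intro hv
          have := congrFun hv 0
          by_cases h : (f 0).isLeft <;> simp [h] at this
        · ext x
          obtain ⟨⟨i1, hi1⟩, ⟨i2, hi2⟩⟩ := hall x
          have key : ∀ i : Fin (k+1),
              (if (f i).isLeft then (1:ℝ) else -1) * (E.submatrix f g) i x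
              = (if i = i1 then 1 else 0) + (if i = i2 then (-1) else 0) := by
            intro i
            have hne : i1 ≠ i2 := by
              intro h; subst h; rw [hi1] at hi2; simp at hi2
            by_cases h1 : i = i1
            · subst h1
              simp [Matrix.submatrix_apply, hi1, hE, if_neg hne]
            · by_cases h2 : i = i2
              · subst h2
                simp [Matrix.submatrix_apply, hi2, hE, if_neg h1]
              · -- entry is zero
                have hz : (E.submatrix f g) i x = 0 := by
                  rcases hfi : f i with k' | j'
                  · have hk' : k' ≠ (g x).2 := by
                      intro h; subst h
                      exact h1 (hf (by rw [hfi, hi1]))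
                    simp [Matrix.submatrix_apply, hfi, hE, hk']
                  · have hj' : j' ≠ (g x).1 := by
                      intro h; subst h
                      exact h2 (hf (by rw [hfi, hi2]))
                    simp [Matrix.submatrix_apply, hfi, hE, hj']
                rw [if_neg h1, if_neg h2, add_zero, hz, mul_zero]
          simp only [Matrix.vecMul, dotProduct, key, Pi.zero_apply]
          rw [Finset.sum_add_distrib, Finset.sum_ite_eq' Finset.univ i1,
            Finset.sum_ite_eq' Finset.univ i2]
          simp
      · push_neg at hall
        obtain ⟨x, hx⟩ := hall
        by_cases hA : ∃ i, f i = Sum.inl (g x).2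
        · -- unique nonzero in column x (the inl row); expand
          obtain ⟨i0, hi0⟩ := hA
          have hB := hx ⟨i0, hi0⟩
          rw [Matrix.det_succ_column (E.submatrix f g) x,
            Fintype.sum_eq_single i0 (fun i hi => ?_)]
          · have h1 : (E.submatrix f g) i0 x = 1 := by
              simp [Matrix.submatrix_apply, hi0, hE]
            rw [h1, mul_one]
            change _ ∈ MonoidHom.mrange SignType.castHom.toMonoidHom
            refine mul_mem (pow_mem ?_ _) (ih _ _)
            exact ⟨-1, by simp⟩
          · have hz : (E.submatrix f g) i x = 0 := by
              rcases hfi : f i with k' | j'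
              · have hk' : k' ≠ (g x).2 := by
                  intro h; subst h
                  exact hi (hf (by rw [hfi, hi0]))
                simp [Matrix.submatrix_apply, hfi, hE, hk']
              · have hj' : j' ≠ (g x).1 := fun h => hB i (by rw [hfi, h])
                simp [Matrix.submatrix_apply, hfi, hE, hj']
            rw [hz, mul_zero, zero_mul]
        · by_cases hB : ∃ i, f i = Sum.inr (g x).1
          · obtain ⟨i0, hi0⟩ := hB
            rw [Matrix.det_succ_column (E.submatrix f g) x,
              Fintype.sum_eq_single i0 (fun i hi => ?_)]
            · have h1 : (E.submatrix f g) i0 x = 1 := by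
                simp [Matrix.submatrix_apply, hi0, hE]
              rw [h1, mul_one]
              change _ ∈ MonoidHom.mrange SignType.castHom.toMonoidHom
              refine mul_mem (pow_mem ?_ _) (ih _ _)
              exact ⟨-1, by simp⟩
            · have hz : (E.submatrix f g) i x = 0 := by
                rcases hfi : f i with k' | j'
                · have hk' : k' ≠ (g x).2 := fun h => hA ⟨i, by rw [hfi, h]⟩
                  simp [Matrix.submatrix_apply, hfi, hE, hk']
                · have hj' : j' ≠ (g x).1 := by
                    intro h; subst h
                    exact hi (hf (by rw [hfi, hi0]))
                  simp [Matrix.submatrix_apply, hfi, hE, hj']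
              rw [hz, mul_zero, zero_mul]
          · -- column x is zero
            refine ⟨0, ?_⟩
            rw [SignType.coe_zero, eq_comm]
            apply Matrix.det_eq_zero_of_column_eq_zero x
            intro i
            rcases hfi : f i with k' | j'
            · have hk' : k' ≠ (g x).2 := fun h => hA ⟨i, by rw [hfi, h]⟩
              simp [Matrix.submatrix_apply, hfi, hE, hk']
            · have hj' : j' ≠ (g x).1 := fun h => hB ⟨i, by rw [hfi, h]⟩
              simp [Matrix.submatrix_apply, hfi, hE, hj']
    · -- repeated rows
      refine ⟨0, ?_⟩
      rw [SignType.coe_zero, eq_comm]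
      rw [Function.not_injective_iff] at hf
      obtain ⟨i, j, hfij, hij⟩ := hf
      rw [← Matrix.det_transpose, Matrix.transpose_submatrix]
      apply Matrix.det_zero_of_column_eq hij.symm
      simp [hfij]

/-- the matrix `D` with rows indexed by `K ⊔ K ⊔ J` and columns indexed by
`J × K`, whose entry in row `k` of the first copy of `K` and column `(j, k')` is `-1` iff
`k = k'` (else `0`), whose entry in row `k` of the second copy of `K` and column `(j, k')` is
`1` iff `k = k'` (else `0`), and whose entry in row `j' ∈ J` and column `(j, k)` is `1` iff
`j = j'` (else `0`), is totally unimodular. -/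
theorem stmt_2 (n : ℕ) (hn : 0 < n) (κ : Type) [Fintype κ] [Nonempty κ] [DecidableEq κ] :
    (Matrix.of (fun r : κ ⊕ κ ⊕ Fin n => fun c : Fin n × κ =>
      match r with
      | Sum.inl k => if k = c.2 then (-1 : ℝ) else 0
      | Sum.inr (Sum.inl k) => if k = c.2 then (1 : ℝ) else 0
      | Sum.inr (Sum.inr j') => if j' = c.1 then (1 : ℝ) else 0)).IsTotallyUnimodular := by
  set E : Matrix (κ ⊕ Fin n) (Fin n × κ) ℝ := Matrix.of (fun r c =>
      match r with
      | Sum.inl k => if k = c.2 then (1 : ℝ) else 0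
      | Sum.inr j' => if j' = c.1 then (1 : ℝ) else 0) with hE
  rw [Matrix.isTotallyUnimodular_iff]
  intro k f g
  set ρ : (κ ⊕ κ ⊕ Fin n) → (κ ⊕ Fin n) := fun r =>
    match r with
    | Sum.inl k => Sum.inl k
    | Sum.inr (Sum.inl k) => Sum.inl k
    | Sum.inr (Sum.inr j) => Sum.inr j with hρ
  set s : (κ ⊕ κ ⊕ Fin n) → ℝ := fun r =>
    match r with
    | Sum.inl _ => -1
    | Sum.inr _ => 1 with hs
  have key : (Matrix.of (fun r : κ ⊕ κ ⊕ Fin n => fun c : Fin n × κ =>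
      match r with
      | Sum.inl k => if k = c.2 then (-1 : ℝ) else 0
      | Sum.inr (Sum.inl k) => if k = c.2 then (1 : ℝ) else 0
      | Sum.inr (Sum.inr j') => if j' = c.1 then (1 : ℝ) else 0)).submatrix f g
      = Matrix.of (fun i j => s (f i) * (E.submatrix (ρ ∘ f) g) i j) := by
    ext i x
    rcases hfi : f i with k' | k' | j' <;>
      simp [Matrix.submatrix_apply, hfi, hE, hρ, hs, mul_ite, ite_mul]
  rw [key, Matrix.det_mul_column (fun i => s (f i))]
  change _ ∈ MonoidHom.mrange SignType.castHom.toMonoidHom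
  refine mul_mem (prod_mem fun i _ => ?_) ?_
  · rcases f i with k' | r
    · exact ⟨-1, by simp [hs]⟩
    · exact ⟨1, by simp [hs]⟩
  · have := aux_incidence_TU n κ
    rw [Matrix.isTotallyUnimodular_iff] at this
    exact this k (ρ ∘ f) g
end

section
/- For every real objective vector g ∈ ℝ^{J×K}, the maximum of Σ_{j∈J} Σ_{k∈K} g_{jk} y_{jk} over the 0-1 feasible assignments y ∈ Y_i equals the maximum of the same linear objective over the polytope P = { y ∈ ℝ^{J×K}_{≥0} : l_k ≤ Σ_{j∈J} y_{jk} ≤ u_k for all k ∈ K, Σ_{k∈K} y_{jk} ≤ 1 for all j ∈ J }; that is, the LP relaxation of the maximum-deviation integer program has the same optimal value as the integer program. -/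
/-!
At a point of `P` where some entry, row sum or column sum is fractional there is a direction
`w ≠ 0` fixing every one of these quantities that is integral. The fractional entries form a
bipartite graph in which a row or column with integral sum cannot have exactly one edge, so each
such row or column meeting the graph has at least two edges; counting edges against these linear
constraints (one of which is redundant when every edge meets two of them) leaves a nonzero kernel
vector. Moving along `±w`, with the sign for which the objective does not decrease, until the first
fractional quantity becomes an integer keeps all bounds, as they are integers, and strictly lowers
the number of fractional quantities. Hence every point of `P` is dominated by an integral point of
`P`, that is by a point of `Y_i`, and the maximum over the finite set `Y_i` (nonempty: round the
point `y_{jk} = l_k / n`) is the maximum over `P`.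
-/

open Finset

/-- The band index set `K = {K⁻, …, -1, 0, 1, …, K⁺}`. -/
noncomputable def bands (Km Kp : ℤ) : Finset ℤ := Finset.Icc Km Kp

/-- `Y_i`: the set of feasible 0-1 deviation assignments. -/
def memY (n : ℕ) (Km Kp : ℤ) (l u : ℤ → ℕ) (y : Fin n → ℤ → ℕ) : Prop :=
  (∀ j : Fin n, ∀ k ∈ bands Km Kp, y j k ≤ 1) ∧
  (∀ k ∈ bands Km Kp, l k ≤ ∑ j : Fin n, y j k ∧ ∑ j : Fin n, y j k ≤ u k) ∧
  (∀ j : Fin n, ∑ k ∈ bands Km Kp, y j k ≤ 1)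

section Rounding

-- `(⊥ : Subring K)` is the image of `ℤ`; membership in it stands for being an integer.
variable {K : Type*} [Field K] [LinearOrder K] [IsStrictOrderedRing K] [FloorRing K]

lemma exists_pos_add_mul_mem_bot {x b : K} (hx : x ∉ (⊥ : Subring K)) (hb : b ≠ 0) :
    ∃ τ > 0, x + τ * b ∈ (⊥ : Subring K) ∧
      ∀ t ∈ Set.Icc 0 τ, x + t * b ∈ Set.Icc (⌊x⌋ : K) ⌈x⌉ := by
  have hfl : (⌊x⌋ : K) < x := Int.floor_lt_self_iff.2 fun h => hx (Subring.mem_bot.2 h)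
  have hce : x < ⌈x⌉ := (Int.le_ceil x).lt_of_ne fun h => hx (h ▸ intCast_mem _ _)
  rcases hb.lt_or_gt with hb | hb
  · refine ⟨(⌊x⌋ - x) / b, div_pos_of_neg_of_neg (by linarith) hb, ?_, fun t ht => ?_⟩
    · rw [div_mul_cancel₀ _ hb.ne, add_sub_cancel]
      exact intCast_mem _ _
    · have : t * b ≥ (⌊x⌋ - x) / b * b := mul_le_mul_of_nonpos_right ht.2 hb.le
      rw [div_mul_cancel₀ _ hb.ne] at this
      constructor <;> nlinarith [ht.1]
  · refine ⟨(⌈x⌉ - x) / b, div_pos (by linarith) hb, ?_, fun t ht => ?_⟩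
    · rw [div_mul_cancel₀ _ hb.ne', add_sub_cancel]
      exact intCast_mem _ _
    · have : t * b ≤ (⌈x⌉ - x) / b * b := mul_le_mul_of_nonneg_right ht.2 hb.le
      rw [div_mul_cancel₀ _ hb.ne'] at this
      constructor <;> nlinarith [ht.1]

lemma exists_pos_first_hit_mem_bot {ι : Type*} (s : Finset ι) (x b : ι → K)
    (hx : ∀ i ∈ s, x i ∉ (⊥ : Subring K)) (hb : ∃ i ∈ s, b i ≠ 0) :
    ∃ t > 0, (∀ i ∈ s, x i + t * b i ∈ Set.Icc (⌊x i⌋ : K) ⌈x i⌉) ∧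
      ∃ i ∈ s, x i + t * b i ∈ (⊥ : Subring K) := by
  classical
  choose! τ hτpos hτint hτbound using fun i (hi : i ∈ s.filter (b · ≠ 0)) =>
    exists_pos_add_mul_mem_bot (hx i (mem_filter.1 hi).1) (mem_filter.1 hi).2
  obtain ⟨i₀, hi₀, hmin⟩ := (s.filter (b · ≠ 0)).exists_min_image τ
    (by simpa [Finset.Nonempty] using hb)
  refine ⟨τ i₀, hτpos i₀ hi₀, fun i hi => ?_, i₀, (mem_filter.1 hi₀).1, hτint i₀ hi₀⟩
  by_cases hbi : b i = 0
  · simpa [hbi] using ⟨Int.floor_le (x i), Int.le_ceil (x i)⟩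
  · exact hτbound i (mem_filter.2 ⟨hi, hbi⟩) _ ⟨(hτpos i₀ hi₀).le, hmin i (mem_filter.2 ⟨hi, hbi⟩)⟩

variable {V ι : Type*} [AddCommGroup V] [Module K V] [Fintype ι]

theorem exists_integral_le_of_exists_dir (q : ι → V →ₗ[K] K) (L U : ι → ℤ)
    (f : V →ₗ[K] K)
    (hdir : ∀ y, (∃ i, q i y ∉ (⊥ : Subring K)) →
      ∃ w, (∀ i, q i y ∈ (⊥ : Subring K) → q i w = 0) ∧ ∃ i, q i w ≠ 0)
    (y : V) (hy : ∀ i, q i y ∈ Set.Icc (L i : K) (U i)) :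
    ∃ y', (∀ i, q i y' ∈ Set.Icc (L i : K) (U i)) ∧ (∀ i, q i y' ∈ (⊥ : Subring K)) ∧
      f y ≤ f y' := by
  classical
  induction hN : #{i | q i y ∉ (⊥ : Subring K)} using Nat.strong_induction_on generalizing y with
  | _ N ih =>
  by_cases hint : ∀ i, q i y ∈ (⊥ : Subring K)
  · exact ⟨y, hy, hint, le_rfl⟩
  obtain ⟨w₀, hw₀, hw₀ne⟩ := hdir y (not_forall.1 hint)
  obtain ⟨w, hw, ⟨i₁, hi₁⟩, hfw⟩ : ∃ w, (∀ i, q i y ∈ (⊥ : Subring K) → q i w = 0) ∧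
      (∃ i, q i w ≠ 0) ∧ 0 ≤ f w := by
    rcases le_total 0 (f w₀) with h | h
    · exact ⟨w₀, hw₀, hw₀ne, h⟩
    · exact ⟨-w₀, by simpa using hw₀, by simpa using hw₀ne, by simpa using h⟩
  obtain ⟨t, ht, hbox, i₀, hi₀, hi₀int⟩ := exists_pos_first_hit_mem_bot
    {i | q i y ∉ (⊥ : Subring K)} (fun i => q i y) (fun i => q i w)
    (fun i hi => (mem_filter.1 hi).2)
    ⟨i₁, mem_filter.2 ⟨mem_univ _, fun h => hi₁ (hw i₁ h)⟩, hi₁⟩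
  have hq : ∀ i, q i (y + t • w) = q i y + t * q i w := by simp
  have hsub : ({i | q i (y + t • w) ∉ (⊥ : Subring K)} : Finset ι) ⊂
      ({i | q i y ∉ (⊥ : Subring K)} : Finset ι) := by
    refine (Finset.ssubset_iff_of_subset fun i hi => ?_).2 ⟨i₀, hi₀, ?_⟩
    · simp only [mem_filter, mem_univ, true_and] at hi ⊢
      intro h
      exact hi (by rw [hq, hw i h, mul_zero, add_zero]; exact h)
    · simpa [hq] using hi₀int
  have hbox' : ∀ i, q i (y + t • w) ∈ Set.Icc (L i : K) (U i) := by
    intro i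
    by_cases hi : q i y ∈ (⊥ : Subring K)
    · rw [hq, hw i hi, mul_zero, add_zero]; exact hy i
    · rw [hq]
      refine Set.Icc_subset_Icc ?_ ?_ (hbox i (mem_filter.2 ⟨mem_univ _, hi⟩))
      · exact_mod_cast Int.le_floor.2 (hy i).1
      · exact_mod_cast Int.ceil_le.2 (hy i).2
  obtain ⟨y', hy', hint', hle⟩ := ih _ (hN ▸ Finset.card_lt_card hsub) (y + t • w) hbox' rfl
  refine ⟨y', hy', hint', le_trans ?_ hle⟩
  rw [map_add, map_smul, smul_eq_mul]
  nlinarith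

end Rounding

lemma Module.exists_ne_zero_forall_apply_eq_zero {K V ι : Type*} [Field K] [AddCommGroup V]
    [Module K V] [FiniteDimensional K V] [Fintype ι] (φ : ι → Module.Dual K V)
    (h : Fintype.card ι < Module.finrank K V) : ∃ v ≠ 0, ∀ i, φ i v = 0 := by
  obtain ⟨v, hv, hv0⟩ := (Submodule.ne_bot_iff _).1
    (LinearMap.ker_ne_bot_of_finrank_lt (f := LinearMap.pi φ) (by simpa using h))
  exact ⟨v, hv0, fun i => congr_fun (LinearMap.mem_ker.1 hv) i⟩

lemma Finset.two_mul_card_le_card_filter {γ δ : Type*} [DecidableEq δ] (F : Finset γ)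
    (f : γ → δ) (S : Finset δ) (h : ∀ d ∈ S, 1 < #{e ∈ F | f e = d}) :
    2 * #S ≤ #{e ∈ F | f e ∈ S} :=
  calc 2 * #S = #S • 2 := by rw [smul_eq_mul, mul_comm]
    _ ≤ ∑ d ∈ S, #{e ∈ F | f e = d} := card_nsmul_le_sum S _ 2 h
    _ = #{e ∈ F | f e ∈ S} := sum_card_fiberwise_eq_card_filter F S f

lemma mem_of_sum_mem {M ι S : Type*} [AddCommGroup M] [SetLike S M] [AddSubgroupClass S M]
    {G : S} {s : Finset ι} {f : ι → M} {i : ι} (hi : i ∈ s) (hsum : ∑ j ∈ s, f j ∈ G)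
    (h : ∀ j ∈ s, j ≠ i → f j ∈ G) : f i ∈ G := by
  classical
  rw [← add_sum_erase s f hi] at hsum
  exact (add_mem_cancel_right <| sum_mem fun j hj =>
    h j (mem_of_mem_erase hj) (ne_of_mem_erase hj)).1 hsum

section Bipartite

variable {α β : Type*}

def entryForm (a : α) (b : β) : (α → β → ℝ) →ₗ[ℝ] ℝ :=
  (LinearMap.proj (φ := fun _ : β => ℝ) b).comp (LinearMap.proj (φ := fun _ : α => β → ℝ) a)

@[simp]
lemma entryForm_apply (a : α) (b : β) (w : α → β → ℝ) : entryForm a b w = w a b := rfl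

variable [Fintype α] {B : Finset β} {F : Finset (α × β)}

lemma rowSum_eq_zero_of_forall_ne {S : Finset α} {T : Finset β} {a₀ : α} {w : α → β → ℝ}
    (hF : ∀ e ∈ F, e.1 ∈ S ∧ e.2 ∈ T) (hTB : T ⊆ B) (hw : ∀ a b, (a, b) ∉ F → w a b = 0)
    (ha₀ : a₀ ∈ S) (hrow : ∀ a ∈ S, a ≠ a₀ → ∑ b ∈ B, w a b = 0)
    (hcol : ∀ b ∈ T, ∑ a, w a b = 0) :
    ∑ b ∈ B, w a₀ b = 0 :=
  calc ∑ b ∈ B, w a₀ b = ∑ a ∈ S, ∑ b ∈ B, w a b := (sum_eq_single_of_mem a₀ ha₀ hrow).symm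
    _ = ∑ a, ∑ b ∈ B, w a b := sum_subset (subset_univ _) fun a _ ha =>
        sum_eq_zero fun b _ => hw a b fun h => ha (hF _ h).1
    _ = ∑ b ∈ B, ∑ a, w a b := sum_comm
    _ = ∑ b ∈ T, ∑ a, w a b := (sum_subset hTB fun b _ hb =>
        sum_eq_zero fun a _ => hw a b fun h => hb (hF _ h).2).symm
    _ = 0 := sum_eq_zero hcol

lemma exists_supported_ne_zero_of_card_lt (B : Finset β) (F : Finset (α × β)) (S : Finset α)
    (T : Finset β) (h : #S + #T < #F) :
    ∃ w : α → β → ℝ, (∀ a b, (a, b) ∉ F → w a b = 0) ∧ w ≠ 0 ∧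
      (∀ a ∈ S, ∑ b ∈ B, w a b = 0) ∧ (∀ b ∈ T, ∑ a, w a b = 0) := by
  classical
  let ext : (F → ℝ) →ₗ[ℝ] α → β → ℝ := LinearMap.pi fun a => LinearMap.pi fun b =>
    if h : (a, b) ∈ F then LinearMap.proj ⟨(a, b), h⟩ else 0
  have hext (v : F → ℝ) (a : α) (b : β) :
      ext v a b = if h : (a, b) ∈ F then v ⟨(a, b), h⟩ else 0 := by
    simp only [ext, LinearMap.pi_apply]
    split_ifs <;> rfl
  obtain ⟨v, hv0, hv⟩ := Module.exists_ne_zero_forall_apply_eq_zero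
    (Sum.elim (fun a : S => (∑ b ∈ B, entryForm (a : α) b) ∘ₗ ext)
      (fun b : T => (∑ a, entryForm a (b : β)) ∘ₗ ext)) (by simpa using h)
  refine ⟨ext v, fun a b hab => by simp [hext, hab], fun h0 => hv0 ?_,
    fun a ha => by simpa using hv (.inl ⟨a, ha⟩), fun b hb => by simpa using hv (.inr ⟨b, hb⟩)⟩
  ext e
  simpa [hext] using congr_fun (congr_fun h0 e.1.1) e.1.2

lemma exists_supported_ne_zero_of_one_lt_card [DecidableEq α] [DecidableEq β] (B : Finset β)
    (F : Finset (α × β)) (hF : F.Nonempty) (hFB : ∀ e ∈ F, e.2 ∈ B) (R : Finset α) (C : Finset β)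
    (hR : ∀ a ∈ R, 1 < #{e ∈ F | e.1 = a}) (hC : ∀ b ∈ C, 1 < #{e ∈ F | e.2 = b}) :
    ∃ w : α → β → ℝ, (∀ a b, (a, b) ∉ F → w a b = 0) ∧ w ≠ 0 ∧
      (∀ a ∈ R, ∑ b ∈ B, w a b = 0) ∧ (∀ b ∈ C, ∑ a, w a b = 0) := by
  have hR' := two_mul_card_le_card_filter F Prod.fst R hR
  have hC' := two_mul_card_le_card_filter F Prod.snd C hC
  by_cases hcov : ∀ e ∈ F, e.1 ∈ R ∧ e.2 ∈ C
  · -- the row constraints sum to the column constraints, so one row constraint may be dropped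
    obtain ⟨e₀, he₀⟩ := hF
    have ha₀ : e₀.1 ∈ R := (hcov e₀ he₀).1
    have hcard : #(R.erase e₀.1) + #C < #F := by
      rw [filter_true_of_mem fun e he => (hcov e he).1] at hR'
      rw [filter_true_of_mem fun e he => (hcov e he).2] at hC'
      have := card_pos.2 ⟨_, ha₀⟩
      rw [card_erase_of_mem ha₀]
      omega
    have hCB : C ⊆ B := fun b hb => by
      obtain ⟨e, he⟩ := card_pos.1 (zero_lt_one.trans (hC b hb))
      exact (mem_filter.1 he).2 ▸ hFB e (mem_filter.1 he).1
    obtain ⟨w, hw, hne, hrow, hcol⟩ := exists_supported_ne_zero_of_card_lt B F _ _ hcard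
    refine ⟨w, hw, hne, fun a ha => ?_, hcol⟩
    by_cases h : a = e₀.1
    · subst h
      exact rowSum_eq_zero_of_forall_ne hcov hCB hw ha
        (fun a ha hne => hrow a (mem_erase.2 ⟨hne, ha⟩)) hcol
    · exact hrow a (mem_erase.2 ⟨h, ha⟩)
  · obtain ⟨e₀, he₀, hne₀⟩ := not_forall₂.1 hcov
    have hcard : #R + #C < #F := by
      have h₁ := card_filter_le F fun e => e.1 ∈ R
      have h₂ := card_filter_le F fun e => e.2 ∈ C
      by_cases h : e₀.1 ∈ R
      · have := card_lt_card <|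
          (filter_ssubset (p := fun e => e.2 ∈ C)).2 ⟨e₀, he₀, fun h' => hne₀ ⟨h, h'⟩⟩
        omega
      · have := card_lt_card ((filter_ssubset (p := fun e => e.1 ∈ R)).2 ⟨e₀, he₀, h⟩)
        omega
    exact exists_supported_ne_zero_of_card_lt B F R C hcard

lemma exists_supported_ne_zero_rowSum_colSum_eq_zero (B : Finset β) (F : Finset (α × β))
    (hF : F.Nonempty) (hFB : ∀ e ∈ F, e.2 ∈ B) (R : Set α) (C : Set β)
    (hR : ∀ e ∈ F, e.1 ∈ R → ∃ e' ∈ F, e'.1 = e.1 ∧ e' ≠ e)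
    (hC : ∀ e ∈ F, e.2 ∈ C → ∃ e' ∈ F, e'.2 = e.2 ∧ e' ≠ e) :
    ∃ w : α → β → ℝ, (∀ a b, (a, b) ∉ F → w a b = 0) ∧ w ≠ 0 ∧
      (∀ a ∈ R, ∑ b ∈ B, w a b = 0) ∧ (∀ b ∈ C, ∑ a, w a b = 0) := by
  classical
  obtain ⟨w, hw, hne, hrow, hcol⟩ := exists_supported_ne_zero_of_one_lt_card B F hF hFB
    ({e ∈ F | e.1 ∈ R}.image Prod.fst) ({e ∈ F | e.2 ∈ C}.image Prod.snd)
    (by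
      simp only [mem_image, mem_filter]
      rintro _ ⟨e, ⟨he, heR⟩, rfl⟩
      obtain ⟨e', he', hee', hne⟩ := hR e he heR
      exact one_lt_card.2 ⟨e, mem_filter.2 ⟨he, rfl⟩, e', mem_filter.2 ⟨he', hee'⟩, hne.symm⟩)
    (by
      simp only [mem_image, mem_filter]
      rintro _ ⟨e, ⟨he, heC⟩, rfl⟩
      obtain ⟨e', he', hee', hne⟩ := hC e he heC
      exact one_lt_card.2 ⟨e, mem_filter.2 ⟨he, rfl⟩, e', mem_filter.2 ⟨he', hee'⟩, hne.symm⟩)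
  refine ⟨w, hw, hne, fun a ha => ?_, fun b hb => ?_⟩
  · by_cases haF : ∃ b, (a, b) ∈ F
    · obtain ⟨b, hab⟩ := haF
      exact hrow a (mem_image.2 ⟨(a, b), mem_filter.2 ⟨hab, ha⟩, rfl⟩)
    · exact sum_eq_zero fun b _ => hw a b fun hab => haF ⟨b, hab⟩
  · by_cases hbF : ∃ a, (a, b) ∈ F
    · obtain ⟨a, hab⟩ := hbF
      exact hcol b (mem_image.2 ⟨(a, b), mem_filter.2 ⟨hab, hb⟩, rfl⟩)
    · exact sum_eq_zero fun a _ => hw a b fun hab => hbF ⟨a, hab⟩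

end Bipartite

section Assignment

variable {α β : Type*} [Fintype α]

def entryRowColForm (B : Finset β) : (α × B) ⊕ α ⊕ B → (α → β → ℝ) →ₗ[ℝ] ℝ
  | .inl e => entryForm e.1 e.2
  | .inr (.inl a) => ∑ b ∈ B, entryForm a b
  | .inr (.inr b) => ∑ a, entryForm a b

lemma entryRowColForm_mem_bot {B : Finset β} {y : α → β → ℝ}
    (hy : ∀ a, ∀ b ∈ B, y a b ∈ (⊥ : Subring ℝ)) (i : (α × B) ⊕ α ⊕ B) :
    entryRowColForm B i y ∈ (⊥ : Subring ℝ) := by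
  rcases i with ⟨a, b⟩ | a | b
  · simpa [entryRowColForm] using hy a b b.2
  · simpa [entryRowColForm] using sum_mem fun b hb => hy a b hb
  · simpa [entryRowColForm] using sum_mem fun a _ => hy a b b.2

lemma entryRowColForm_exists_dir (B : Finset β) (y : α → β → ℝ)
    (hy : ∃ i, entryRowColForm B i y ∉ (⊥ : Subring ℝ)) :
    ∃ w : α → β → ℝ, (∀ i, entryRowColForm B i y ∈ (⊥ : Subring ℝ) → entryRowColForm B i w = 0) ∧
      ∃ i, entryRowColForm B i w ≠ 0 := by
  classical
  set F := {e ∈ (univ : Finset α) ×ˢ B | y e.1 e.2 ∉ (⊥ : Subring ℝ)}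
  have hF : ∀ a, ∀ b ∈ B, (a, b) ∉ F → y a b ∈ (⊥ : Subring ℝ) := by
    intro a b hb h
    by_contra h'
    exact h (mem_filter.2 ⟨mem_product.2 ⟨mem_univ a, hb⟩, h'⟩)
  have hFne : F.Nonempty := by
    by_contra hne
    obtain ⟨i, hi⟩ := hy
    exact hi (entryRowColForm_mem_bot (fun a b hb => hF a b hb fun h => hne ⟨_, h⟩) i)
  have hsupp : ∀ e ∈ F, e.2 ∈ B := fun e he => (mem_product.1 (mem_filter.1 he).1).2
  -- an integral row or column sum cannot have exactly one non-integral term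
  have hR : ∀ e ∈ F, e.1 ∈ {a | ∑ b ∈ B, y a b ∈ (⊥ : Subring ℝ)} →
      ∃ e' ∈ F, e'.1 = e.1 ∧ e' ≠ e := by
    intro e he hrow
    by_contra! h
    exact (mem_filter.1 he).2 <| mem_of_sum_mem (hsupp e he) hrow fun b hb hbe =>
      hF e.1 b hb fun h' => hbe (congrArg Prod.snd (h _ h' rfl))
  have hC : ∀ e ∈ F, e.2 ∈ {b | ∑ a, y a b ∈ (⊥ : Subring ℝ)} →
      ∃ e' ∈ F, e'.2 = e.2 ∧ e' ≠ e := by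
    intro e he hcol
    by_contra! h
    exact (mem_filter.1 he).2 <| mem_of_sum_mem (f := (y · e.2)) (mem_univ e.1) hcol
      fun a _ hae => hF a e.2 (hsupp e he) fun h' => hae (congrArg Prod.fst (h _ h' rfl))
  obtain ⟨w, hw, hne, hrow, hcol⟩ :=
    exists_supported_ne_zero_rowSum_colSum_eq_zero B F hFne hsupp _ _ hR hC
  refine ⟨w, fun i hi => ?_, ?_⟩
  · rcases i with ⟨a, b⟩ | a | b
    · simp only [entryRowColForm, entryForm_apply] at hi ⊢
      exact hw a b fun h => (mem_filter.1 h).2 hi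
    · simpa [entryRowColForm] using hrow a (by simpa [entryRowColForm] using hi)
    · simpa [entryRowColForm] using hcol b (by simpa [entryRowColForm] using hi)
  · obtain ⟨a, b, hab⟩ : ∃ a b, w a b ≠ 0 := by
      by_contra! h
      exact hne (funext₂ h)
    have hb : b ∈ B := by_contra fun hb => hab (hw a b fun h => hb (hsupp _ h))
    exact ⟨.inl (a, ⟨b, hb⟩), by simpa [entryRowColForm] using hab⟩

-- The polytope `P`, the LP relaxation of `Y_i`.
def memP (B : Finset β) (l u : β → ℕ) (y : α → β → ℝ) : Prop :=
  (∀ a, ∀ b ∈ B, 0 ≤ y a b) ∧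
    (∀ b ∈ B, (l b : ℝ) ≤ ∑ a, y a b ∧ ∑ a, y a b ≤ u b) ∧
    ∀ a, ∑ b ∈ B, y a b ≤ 1

theorem exists_integral_memP_le {B : Finset β} {l u : β → ℕ} (g : α → β → ℝ)
    {y : α → β → ℝ} (hy : memP B l u y) :
    ∃ y', memP B l u y' ∧ (∀ a, ∀ b ∈ B, y' a b ∈ (⊥ : Subring ℝ)) ∧
      ∑ a, ∑ b ∈ B, g a b * y a b ≤ ∑ a, ∑ b ∈ B, g a b * y' a b := by
  obtain ⟨hpos, hcol, hrow⟩ := hy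
  -- `P` as integer bounds on entries, row sums and column sums (`y a b ≤ 1` and
  -- `0 ≤ ∑ b ∈ B, y a b` are implied)
  set L : (α × B) ⊕ α ⊕ B → ℤ := Sum.elim 0 (Sum.elim 0 fun b => l b)
  set U : (α × B) ⊕ α ⊕ B → ℤ := Sum.elim 1 (Sum.elim 1 fun b => u b)
  have hbox : ∀ i, entryRowColForm B i y ∈ Set.Icc (L i : ℝ) (U i) := by
    rintro (⟨a, b⟩ | a | b)
    · simpa [L, U, entryRowColForm] using
        ⟨hpos a b b.2, (single_le_sum (fun b hb => hpos a b hb) b.2).trans (hrow a)⟩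
    · simpa [L, U, entryRowColForm] using ⟨sum_nonneg fun b hb => hpos a b hb, hrow a⟩
    · simpa [L, U, entryRowColForm] using hcol b b.2
  obtain ⟨y', hy', hint, hle⟩ := exists_integral_le_of_exists_dir (entryRowColForm B) L U
    (∑ a, ∑ b ∈ B, g a b • entryForm a b) (entryRowColForm_exists_dir B) y hbox
  refine ⟨y', ⟨fun a b hb => ?_, fun b hb => ?_, fun a => ?_⟩, fun a b hb => ?_, ?_⟩
  · simpa [L, entryRowColForm] using (hy' (.inl (a, ⟨b, hb⟩))).1
  · simpa [L, U, entryRowColForm] using hy' (.inr (.inr ⟨b, hb⟩))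
  · simpa [U, entryRowColForm] using (hy' (.inr (.inl a))).2
  · simpa [entryRowColForm] using hint (.inl (a, ⟨b, hb⟩))
  · simpa using hle

end Assignment

lemma natCast_floor_of_mem_bot {x : ℝ} (h0 : 0 ≤ x) (hx : x ∈ (⊥ : Subring ℝ)) :
    (⌊x⌋₊ : ℝ) = x := by
  obtain ⟨m, rfl⟩ := Subring.mem_bot.1 hx
  rw [natCast_floor_eq_intCast_floor h0, Int.floor_intCast]

section Deviation

variable {n : ℕ} {Km Kp : ℤ} {l u : ℤ → ℕ}

lemma memP_natCast_of_memY {y : Fin n → ℤ → ℕ} (hy : memY n Km Kp l u y) :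
    memP (bands Km Kp) l u fun j k => (y j k : ℝ) := by
  obtain ⟨-, hcol, hrow⟩ := hy
  refine ⟨fun _ _ _ => Nat.cast_nonneg _, fun k hk => ?_, fun j => ?_⟩ <;> dsimp only
  · exact_mod_cast hcol k hk
  · exact_mod_cast hrow j

lemma memY_natFloor_of_memP {y : Fin n → ℤ → ℝ} (hy : memP (bands Km Kp) l u y)
    (hint : ∀ j, ∀ k ∈ bands Km Kp, y j k ∈ (⊥ : Subring ℝ)) :
    memY n Km Kp l u fun j k => ⌊y j k⌋₊ := by
  obtain ⟨hpos, hcol, hrow⟩ := hy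
  have hcast : ∀ j, ∀ k ∈ bands Km Kp, (⌊y j k⌋₊ : ℝ) = y j k := fun j k hk =>
    natCast_floor_of_mem_bot (hpos j k hk) (hint j k hk)
  refine ⟨fun j k hk => Nat.floor_le_one_of_le_one ?_, fun k hk => ?_, fun j => ?_⟩
  · exact (single_le_sum (fun k hk => hpos j k hk) hk).trans (hrow j)
  · have hsum : ((∑ j, ⌊y j k⌋₊ : ℕ) : ℝ) = ∑ j, y j k := by
      push_cast
      exact sum_congr rfl fun j _ => hcast j k hk
    have := hcol k hk
    rw [← hsum] at this
    exact ⟨by exact_mod_cast this.1, by exact_mod_cast this.2⟩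
  · have : ((∑ k ∈ bands Km Kp, ⌊y j k⌋₊ : ℕ) : ℝ) = ∑ k ∈ bands Km Kp, y j k := by
      push_cast
      exact sum_congr rfl fun k hk => hcast j k hk
    exact_mod_cast this ▸ hrow j

lemma exists_memY_le_of_memP (g : Fin n → ℤ → ℝ) {y : Fin n → ℤ → ℝ}
    (hy : memP (bands Km Kp) l u y) :
    ∃ z, memY n Km Kp l u z ∧
      ∑ j, ∑ k ∈ bands Km Kp, g j k * y j k ≤ ∑ j, ∑ k ∈ bands Km Kp, g j k * (z j k : ℝ) := by
  obtain ⟨y', hy', hint, hle⟩ := exists_integral_memP_le g hy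
  refine ⟨_, memY_natFloor_of_memP hy' hint, hle.trans_eq <| sum_congr rfl fun j _ =>
    sum_congr rfl fun k hk => ?_⟩
  rw [natCast_floor_of_mem_bot (hy'.1 j k hk) (hint j k hk)]

lemma memP_div_of_sum_le (hn : 0 < n) (hlu : ∀ k ∈ bands Km Kp, l k ≤ u k)
    (hl : ∑ k ∈ bands Km Kp, l k ≤ n) :
    memP (bands Km Kp) l u fun (_ : Fin n) k => (l k : ℝ) / n := by
  have hn' : (n : ℝ) ≠ 0 := by positivity
  refine ⟨fun _ _ _ => by positivity, fun k hk => ?_, fun j => ?_⟩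
  · simp only [sum_const, card_univ, Fintype.card_fin, nsmul_eq_mul, mul_div_cancel₀ _ hn']
    exact ⟨le_rfl, by exact_mod_cast hlu k hk⟩
  · rw [← sum_div, div_le_one (by positivity)]
    exact_mod_cast hl

lemma finite_objective_memY (g : Fin n → ℤ → ℝ) :
    {v : ℝ | ∃ y : Fin n → ℤ → ℕ, memY n Km Kp l u y ∧
      v = ∑ j : Fin n, ∑ k ∈ bands Km Kp, g j k * (y j k : ℝ)}.Finite := by
  classical
  refine ((univ ×ˢ bands Km Kp).powerset.finite_toSet.image
    fun S => ∑ e ∈ S, g e.1 e.2).subset ?_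
  rintro _ ⟨y, hy, rfl⟩
  refine ⟨{e ∈ (univ : Finset (Fin n)) ×ˢ bands Km Kp | y e.1 e.2 = 1},
    mem_coe.2 (mem_powerset.2 (filter_subset _ _)), ?_⟩
  dsimp only
  rw [sum_filter, sum_product]
  refine sum_congr rfl fun j _ => sum_congr rfl fun k hk => ?_
  rcases (by have := hy.1 j k hk; omega : y j k = 0 ∨ y j k = 1) with h | h <;> simp [h]

end Deviation

theorem stmt_4_general (n : ℕ) (hn : 0 < n) (Km Kp : ℤ)
    (l u : ℤ → ℕ)
    (hlu : ∀ k ∈ bands Km Kp, l k ≤ u k)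
    (hl : ∑ k ∈ bands Km Kp, l k ≤ n)
    (g : Fin n → ℤ → ℝ) :
    ∃ M : ℝ,
      IsGreatest {v : ℝ | ∃ y : Fin n → ℤ → ℕ, memY n Km Kp l u y ∧
          v = ∑ j : Fin n, ∑ k ∈ bands Km Kp, g j k * (y j k : ℝ)} M ∧
      IsGreatest {v : ℝ | ∃ y : Fin n → ℤ → ℝ,
          (∀ j : Fin n, ∀ k ∈ bands Km Kp, 0 ≤ y j k) ∧
          (∀ k ∈ bands Km Kp,
            (l k : ℝ) ≤ ∑ j : Fin n, y j k ∧ ∑ j : Fin n, y j k ≤ (u k : ℝ)) ∧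
          (∀ j : Fin n, ∑ k ∈ bands Km Kp, y j k ≤ 1) ∧
          v = ∑ j : Fin n, ∑ k ∈ bands Km Kp, g j k * y j k} M := by
  obtain ⟨z₀, hz₀, -⟩ := exists_memY_le_of_memP g (memP_div_of_sum_le hn hlu hl)
  obtain ⟨M, ⟨y, hy, rfl⟩, hmax⟩ :=
    Set.exists_max_image _ id (finite_objective_memY g) ⟨_, z₀, hz₀, rfl⟩
  obtain ⟨hpos, hcol, hrow⟩ := memP_natCast_of_memY hy
  refine ⟨_, ⟨⟨y, hy, rfl⟩, hmax⟩, ⟨_, hpos, hcol, hrow, rfl⟩, ?_⟩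
  rintro _ ⟨y', h₁, h₂, h₃, rfl⟩
  obtain ⟨z, hz, hle⟩ := exists_memY_le_of_memP g ⟨h₁, h₂, h₃⟩
  exact hle.trans (hmax _ ⟨z, hz, rfl⟩)

/-- for every real objective `g ∈ ℝ^{J×K}`, the maximum of
`∑_j ∑_k g_{jk} y_{jk}` over the 0-1 feasible assignments `Y_i` equals the maximum of the same
linear objective over the LP relaxation polytope `P`; both maxima are attained and coincide. -/
theorem stmt_4 (n : ℕ) (hn : 0 < n) (Km Kp : ℤ) (hKm : Km < 0) (hKp : 0 < Kp)
    (d : Fin n → ℤ → ℝ) (hd0 : ∀ j : Fin n, d j 0 = 0)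
    (l u : ℤ → ℕ)
    (hlu : ∀ k ∈ bands Km Kp, l k ≤ u k)
    (hun : ∀ k ∈ bands Km Kp, u k ≤ n)
    (hu0 : u 0 = n)
    (hl : ∑ k ∈ bands Km Kp, l k ≤ n)
    (g : Fin n → ℤ → ℝ) :
    ∃ M : ℝ,
      IsGreatest {v : ℝ | ∃ y : Fin n → ℤ → ℕ, memY n Km Kp l u y ∧
          v = ∑ j : Fin n, ∑ k ∈ bands Km Kp, g j k * (y j k : ℝ)} M ∧
      IsGreatest {v : ℝ | ∃ y : Fin n → ℤ → ℝ,
          (∀ j : Fin n, ∀ k ∈ bands Km Kp, 0 ≤ y j k) ∧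
          (∀ k ∈ bands Km Kp,
            (l k : ℝ) ≤ ∑ j : Fin n, y j k ∧ ∑ j : Fin n, y j k ≤ (u k : ℝ)) ∧
          (∀ j : Fin n, ∑ k ∈ bands Km Kp, y j k ≤ 1) ∧
          v = ∑ j : Fin n, ∑ k ∈ bands Km Kp, g j k * y j k} M :=
  stmt_4_general n hn Km Kp l u hlu hl g
end

section
/- For every x ∈ ℝ^n with x ≥ 0, the maximum deviation DEV_i(x) = max_{y∈Y_i} Σ_{j∈J} Σ_{k∈K} d^k_{ij} x_j y_{jk} equals the minimum of −Σ_{k∈K} l_k v_k + Σ_{k∈K} u_k w_k + Σ_{j∈J} z_j over all v, w ∈ ℝ^K_{≥0} and z ∈ ℝ^J_{≥0} satisfying −v_k + w_k + z_j ≥ d^k_{ij} x_j for all j ∈ J and k ∈ K, and this minimum is attained. -/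
open Finset

/-- The set of total deviations `∑_j ∑_k d^k_{ij} x_j y_{jk}` achievable by assignments in
`Y_i`; its maximum is `DEV_i(x)`. -/
def devSet (n : ℕ) (Km Kp : ℤ) (l u : ℤ → ℕ) (d : Fin n → ℤ → ℝ) (x : Fin n → ℝ) :
    Set ℝ :=
  {v | ∃ y : Fin n → ℤ → ℕ, memY n Km Kp l u y ∧
    v = ∑ j : Fin n, ∑ k ∈ bands Km Kp, d j k * x j * (y j k : ℝ)}

/-!
Weak duality is the termwise estimate `d x y ≤ (-v + w + z) y`, summed against the row and
column constraints on `y`. For the converse, encode a deviation assignment as a map `σ` from the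
items to the nodes `none ∪ K` and take an optimal one. Moving items along a chain of nodes changes
the loads only at its two ends, so optimality rules out cycles of moves with positive gain, and
chains with positive gain from a node above its lower bound to a node below its upper bound.
Longest-chain (Bellman–Ford) potentials `p` therefore exist, with `p > 0` only at nodes at their
upper bound and `p < 0` only at nodes at their lower bound. Then `w = p⁺` and `v = p⁻` on the
bands, and `z j = c j (σ j) - p (σ j)`, form a dual solution whose value is that of `σ`, by
complementary slackness.
-/

lemma card_filter_sigma_fst_eq {ι : Type*} [Fintype ι] [DecidableEq ι] (m : ι → ℕ) (i : ι) :
    #{p : Σ i, Fin (m i) | p.1 = i} = m i := by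
  rw [show ({p : Σ i, Fin (m i) | p.1 = i} : Finset _) = univ.map (Function.Embedding.sigmaMk i) by
    ext ⟨i', x⟩
    simp only [mem_filter, mem_univ, true_and, mem_map, Function.Embedding.sigmaMk_apply]
    constructor
    · rintro rfl
      exact ⟨x, rfl⟩
    · rintro ⟨y, h⟩
      exact (Sigma.mk.inj_iff.1 h).1.symm]
  simp

namespace Assignment

section Chains

variable {α β : Type*}

/-- A move `(j, b)` sends item `j` to node `b`. -/
inductive IsChain (σ : α → β) : β → List (α × β) → β → Prop
  | nil (a : β) : IsChain σ a [] a
  | cons {j : α} {a b c : β} {L : List (α × β)} :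
      σ j = a → IsChain σ b L c → IsChain σ a ((j, b) :: L) c

def gain (C : α → β → ℝ) (σ : α → β) (L : List (α × β)) : ℝ :=
  (L.map fun m => C m.1 m.2 - C m.1 (σ m.1)).sum

def applyMoves [DecidableEq α] : (α → β) → List (α × β) → α → β
  | σ, [] => σ
  | σ, (j, b) :: L => applyMoves (Function.update σ j b) L

variable {σ σ' : α → β} {C : α → β → ℝ} {a b c : β} {L L₁ L₂ : List (α × β)}

lemma gain_append : gain C σ (L₁ ++ L₂) = gain C σ L₁ + gain C σ L₂ := by
  simp [gain]

lemma gain_congr (h : ∀ m ∈ L, σ' m.1 = σ m.1) : gain C σ' L = gain C σ L := by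
  unfold gain
  rw [List.map_congr_left fun m hm => by rw [h m hm]]

lemma update_apply_fst_of_notMem [DecidableEq α] {j : α} (b : β) (hj : j ∉ L.map Prod.fst) :
    ∀ m ∈ L, Function.update σ j b m.1 = σ m.1 :=
  fun _ hm => Function.update_of_ne (by rintro rfl; exact hj (List.mem_map_of_mem hm)) _ _

namespace IsChain

lemma congr (hch : IsChain σ a L c) (h : ∀ m ∈ L, σ' m.1 = σ m.1) : IsChain σ' a L c := by
  induction hch with
  | nil a => exact nil a
  | cons hj _ ih =>
    exact cons ((h (_, _) List.mem_cons_self).trans hj) (ih fun m hm => h m (by simp [hm]))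

lemma append (h₁ : IsChain σ a L₁ b) (h₂ : IsChain σ b L₂ c) : IsChain σ a (L₁ ++ L₂) c := by
  induction h₁ with
  | nil => exact h₂
  | cons hj _ ih => exact cons hj (ih h₂)

lemma concat (hch : IsChain σ a L b) (j : α) (hj : σ j = b) (c : β) :
    IsChain σ a (L ++ [(j, c)]) c :=
  hch.append (cons hj (nil c))

lemma split (hch : IsChain σ a L c) (hb : b ∈ a :: L.map Prod.snd) :
    ∃ L₁ L₂, L = L₁ ++ L₂ ∧ IsChain σ a L₁ b ∧ IsChain σ b L₂ c := by
  induction hch with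
  | nil a =>
    obtain rfl : b = a := by simpa using hb
    exact ⟨[], [], rfl, nil b, nil b⟩
  | @cons j a b' c L hj hL ih =>
    rcases List.mem_cons.1 hb with rfl | hb
    · exact ⟨[], _, rfl, nil b, cons hj hL⟩
    · obtain ⟨L₁, L₂, rfl, h₁, h₂⟩ := ih (by simpa using hb)
      exact ⟨(j, b') :: L₁, L₂, rfl, cons hj h₁, h₂⟩

lemma end_mem (hch : IsChain σ a L c) : c ∈ a :: L.map Prod.snd := by
  induction hch with
  | nil => simp
  | cons _ _ ih => exact List.mem_cons_of_mem _ ih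

lemma map_source (hch : IsChain σ a L c) :
    L.map (fun m => σ m.1) = (a :: L.map Prod.snd).dropLast := by
  induction hch with
  | nil => simp
  | cons hj _ ih => simp [ih, hj, List.dropLast_cons_of_ne_nil]

lemma nodup_items (hch : IsChain σ a L c) (hnd : (a :: L.map Prod.snd).dropLast.Nodup) :
    (L.map Prod.fst).Nodup := by
  rw [← hch.map_source] at hnd
  exact List.Nodup.of_map σ (by rwa [List.map_map])

end IsChain

end Chains

section Load

variable {α β : Type*} [Fintype α] [DecidableEq α]

def weight (C : α → β → ℝ) (σ : α → β) : ℝ := ∑ j, C j (σ j)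

lemma weight_update (C : α → β → ℝ) (σ : α → β) (j : α) (b : β) :
    weight C (Function.update σ j b) = weight C σ + (C j b - C j (σ j)) := by
  simp only [weight]
  rw [← add_sum_erase _ _ (mem_univ j), ← add_sum_erase _ _ (mem_univ j),
    sum_congr rfl fun i hi => by rw [Function.update_of_ne (ne_of_mem_erase hi)],
    Function.update_self]
  ring

lemma IsChain.weight_applyMoves {C : α → β → ℝ} {σ : α → β} {a c : β} {L : List (α × β)}
    (hch : IsChain σ a L c) (hnd : (L.map Prod.fst).Nodup) :
    weight C (applyMoves σ L) = weight C σ + gain C σ L := by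
  induction L generalizing σ a with
  | nil => simp [applyMoves, gain]
  | cons m L ih =>
    obtain ⟨j, b⟩ := m
    rcases hch with _ | ⟨hj, hL⟩
    rw [List.map_cons, List.nodup_cons] at hnd
    have hfix : ∀ m ∈ L, Function.update σ j b m.1 = σ m.1 := update_apply_fst_of_notMem b hnd.1
    rw [applyMoves, ih (hL.congr hfix) hnd.2, weight_update, gain_congr hfix]
    simp only [gain, List.map_cons, List.sum_cons]
    ring

variable [DecidableEq β]

def load (σ : α → β) (b : β) : ℕ := #{j | σ j = b}

lemma load_update (σ : α → β) (j : α) (b o : β) :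
    load (Function.update σ j b) o + (if σ j = o then 1 else 0)
      = load σ o + (if b = o then 1 else 0) := by
  simp only [load, card_filter]
  rw [← add_sum_erase _ _ (mem_univ j), ← add_sum_erase _ _ (mem_univ j),
    sum_congr rfl fun i hi => by rw [Function.update_of_ne (ne_of_mem_erase hi)],
    Function.update_self]
  ring

lemma IsChain.load_applyMoves {σ : α → β} {a c : β} {L : List (α × β)}
    (hch : IsChain σ a L c) (hnd : (L.map Prod.fst).Nodup) (o : β) :
    load (applyMoves σ L) o + (if a = o then 1 else 0)
      = load σ o + (if c = o then 1 else 0) := by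
  induction L generalizing σ a with
  | nil =>
    rcases hch with _ | _
    rfl
  | cons m L ih =>
    obtain ⟨j, b⟩ := m
    rcases hch with _ | ⟨rfl, hL⟩
    rw [List.map_cons, List.nodup_cons] at hnd
    have hfix : ∀ m ∈ L, Function.update σ j b m.1 = σ m.1 := update_apply_fst_of_notMem b hnd.1
    have := ih (hL.congr hfix) hnd.2
    have := load_update σ j b o
    rw [applyMoves]
    omega

end Load

section Slackness

variable {α β : Type*} [Fintype α] [Fintype β] [DecidableEq β]

lemma sum_comp_eq_sum_load (σ : α → β) (f : β → ℝ) :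
    ∑ j, f (σ j) = ∑ b, (load σ b : ℝ) * f b := by
  rw [← sum_fiberwise' univ σ f]
  simp [load]

lemma sum_price_eq_of_slackness {lo hi : β → ℕ} {σ : α → β} (p : β → ℝ) (hhi : ∀ b, 0 < p b → load σ b = hi b)
    (hlo : ∀ b, p b < 0 → load σ b = lo b) :
    ∑ j, p (σ j) = ∑ b, ((hi b : ℝ) * max (p b) 0 - (lo b : ℝ) * max (-p b) 0) := by
  rw [sum_comp_eq_sum_load]
  refine sum_congr rfl fun b _ => ?_
  rcases lt_trichotomy (p b) 0 with hb | hb | hb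
  · rw [hlo b hb, max_eq_right hb.le, max_eq_left (by linarith)]
    ring
  · simp [hb]
  · rw [hhi b hb, max_eq_left hb.le, max_eq_right (by linarith)]
    ring

end Slackness

section Potential

variable {α β : Type*} [Fintype α] [Fintype β] {C : α → β → ℝ} {σ : α → β} {s : β → ℝ}

def chainValues (C : α → β → ℝ) (σ : α → β) (s : β → ℝ) (b : β) : Set ℝ :=
  {r | ∃ a L, IsChain σ a L b ∧ (a :: L.map Prod.snd).Nodup ∧ r = s a + gain C σ L}

/-- Longest-path (Bellman–Ford) potential over the chains without repeated nodes. -/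
noncomputable def potential (C : α → β → ℝ) (σ : α → β) (s : β → ℝ) (b : β) : ℝ :=
  sSup (chainValues C σ s b)

lemma chainValues_finite (b : β) : (chainValues C σ s b).Finite := by
  classical
  refine (Set.finite_range fun q : β × {L : List (α × β) // L.Nodup} =>
    s q.1 + gain C σ q.2).subset ?_
  rintro r ⟨a, L, -, hnd, rfl⟩
  exact ⟨(a, ⟨L, (List.nodup_cons.1 hnd).2.of_map _⟩), rfl⟩

lemma le_potential {b : β} {r : ℝ} (hr : r ∈ chainValues C σ s b) : r ≤ potential C σ s b :=
  le_csSup (chainValues_finite b).bddAbove hr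

lemma self_le_potential (b : β) : s b ≤ potential C σ s b :=
  le_potential ⟨b, [], .nil b, List.nodup_singleton b, by simp [gain]⟩

lemma exists_chain_potential_eq (b : β) :
    ∃ a L, IsChain σ a L b ∧ (a :: L.map Prod.snd).Nodup ∧
      potential C σ s b = s a + gain C σ L :=
  Set.Nonempty.csSup_mem (s := chainValues C σ s b)
    ⟨s b, b, [], .nil b, List.nodup_singleton b, by simp [gain]⟩ (chainValues_finite b)

lemma potential_add_le
    (hcyc : ∀ b L, IsChain σ b L b → (L.map Prod.fst).Nodup → gain C σ L ≤ 0) (j : α) (b : β) :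
    potential C σ s (σ j) + (C j b - C j (σ j)) ≤ potential C σ s b := by
  classical
  obtain ⟨a, L, hch, hnd, hp⟩ := exists_chain_potential_eq (C := C) (σ := σ) (s := s) (σ j)
  have hmove : gain C σ [(j, b)] = C j b - C j (σ j) := by simp [gain]
  by_cases hb : b ∈ a :: L.map Prod.snd
  · -- the part of the chain after `b`, closed up by the new move, is a cycle
    obtain ⟨L₁, L₂, rfl, h₁, h₂⟩ := hch.split hb
    rw [List.map_append, ← List.cons_append] at hnd
    have hnd₂ : (b :: L₂.map Prod.snd).Nodup :=
      List.nodup_cons.2 ⟨List.disjoint_of_nodup_append hnd h₁.end_mem, hnd.of_append_right⟩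
    have hcycle := hcyc b _ (h₂.concat j rfl b) <| (h₂.concat j rfl b).nodup_items
      (by rwa [List.map_append, ← List.cons_append, List.map_singleton, List.dropLast_concat])
    have hprefix : s a + gain C σ L₁ ≤ potential C σ s b :=
      le_potential ⟨a, L₁, h₁, hnd.of_append_left, rfl⟩
    rw [gain_append, hmove] at hcycle
    rw [hp, gain_append]
    linarith
  · refine le_potential ⟨a, L ++ [(j, b)], hch.concat j rfl b, ?_,
      by rw [hp, gain_append, hmove, add_assoc]⟩
    rw [List.map_append, ← List.cons_append]
    exact hnd.append (List.nodup_singleton b) (by simpa using hb)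

lemma gain_le_sum_abs {L : List (α × β)} (hnd : (L.map Prod.fst).Nodup) :
    gain C σ L ≤ ∑ m : α × β, |C m.1 m.2 - C m.1 (σ m.1)| := by
  classical
  calc gain C σ L ≤ (L.map fun m => |C m.1 m.2 - C m.1 (σ m.1)|).sum :=
        List.sum_le_sum fun m _ => le_abs_self _
    _ = ∑ m ∈ L.toFinset, |C m.1 m.2 - C m.1 (σ m.1)| :=
        (List.sum_toFinset _ (hnd.of_map _)).symm
    _ ≤ _ := sum_le_univ_sum_of_nonneg fun m => abs_nonneg _

end Potential

section Optimality

variable {α β : Type*} [Fintype α] [DecidableEq β] {lo hi : β → ℕ} {C : α → β → ℝ}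
  {σ : α → β} {a b c : β} {L : List (α × β)}

def IsFeasible (lo hi : β → ℕ) (σ : α → β) : Prop := ∀ b, lo b ≤ load σ b ∧ load σ b ≤ hi b

def IsOptimal (lo hi : β → ℕ) (C : α → β → ℝ) (σ : α → β) : Prop :=
  IsFeasible lo hi σ ∧ ∀ τ, IsFeasible lo hi τ → weight C τ ≤ weight C σ

section Moves

variable [DecidableEq α]

lemma IsChain.isFeasible_applyMoves (hσ : IsFeasible lo hi σ) (hch : IsChain σ a L c)
    (hnd : (L.map Prod.fst).Nodup) (hsrc : a ≠ c → lo a < load σ a)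
    (hsnk : a ≠ c → load σ c < hi c) : IsFeasible lo hi (applyMoves σ L) := by
  intro o
  have hload := hch.load_applyMoves hnd o
  have := hσ o
  by_cases hac : a = c
  · subst hac
    omega
  · have := hsrc hac
    have := hsnk hac
    split_ifs at hload <;> subst_vars <;> omega

lemma IsOptimal.gain_nonpos (hσ : IsOptimal lo hi C σ) (hch : IsChain σ a L c)
    (hnd : (L.map Prod.fst).Nodup) (hsrc : a ≠ c → lo a < load σ a)
    (hsnk : a ≠ c → load σ c < hi c) : gain C σ L ≤ 0 := by
  have := hσ.2 _ (hch.isFeasible_applyMoves hσ.1 hnd hsrc hsnk)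
  rw [hch.weight_applyMoves hnd] at this
  linarith

end Moves

variable [Fintype β]

/-- Chains out of nodes whose load may still decrease start at `0`; all others start so low
that, by `gain_le_sum_abs`, their value stays negative. -/
def sourceStart (lo : β → ℕ) (C : α → β → ℝ) (σ : α → β) (a : β) : ℝ :=
  if lo a < load σ a then 0 else -(1 + ∑ m : α × β, |C m.1 m.2 - C m.1 (σ m.1)|)

lemma IsFeasible.load_eq_lo_of_potential_neg (hσ : IsFeasible lo hi σ)
    (hb : potential C σ (sourceStart lo C σ) b < 0) : load σ b = lo b := by
  have hstart := self_le_potential (C := C) (σ := σ) (s := sourceStart lo C σ) b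
  by_contra hne
  rw [sourceStart, if_pos (lt_of_le_of_ne (hσ b).1 (Ne.symm hne))] at hstart
  linarith

variable [DecidableEq α]

lemma IsOptimal.potential_add_le (hσ : IsOptimal lo hi C σ) (j : α) (b : β) :
    potential C σ (sourceStart lo C σ) (σ j) + (C j b - C j (σ j))
      ≤ potential C σ (sourceStart lo C σ) b :=
  Assignment.potential_add_le
    (fun _ _ hch hnd => hσ.gain_nonpos hch hnd (absurd rfl) (absurd rfl)) j b

lemma IsOptimal.load_eq_hi_of_potential_pos (hσ : IsOptimal lo hi C σ)
    (hb : 0 < potential C σ (sourceStart lo C σ) b) : load σ b = hi b := by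
  obtain ⟨a, L, hch, hnd, hp⟩ :=
    exists_chain_potential_eq (C := C) (σ := σ) (s := sourceStart lo C σ) b
  have hitems := hch.nodup_items (hnd.sublist (List.dropLast_sublist _))
  by_cases hsrc : lo a < load σ a
  · rw [sourceStart, if_pos hsrc] at hp
    by_contra hne
    have hsnk : load σ b < hi b := lt_of_le_of_ne (hσ.1 b).2 hne
    have := hσ.gain_nonpos hch hitems (fun _ => hsrc) (fun _ => hsnk)
    linarith
  · rw [sourceStart, if_neg hsrc] at hp
    linarith [gain_le_sum_abs (C := C) (σ := σ) hitems]

lemma IsOptimal.exists_potential (hσ : IsOptimal lo hi C σ) :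
    ∃ p : β → ℝ, (∀ j b, p (σ j) + (C j b - C j (σ j)) ≤ p b) ∧
      (∀ b, 0 < p b → load σ b = hi b) ∧ (∀ b, p b < 0 → load σ b = lo b) :=
  ⟨potential C σ (sourceStart lo C σ), hσ.potential_add_le,
    fun _ => hσ.load_eq_hi_of_potential_pos, fun _ => hσ.1.load_eq_lo_of_potential_neg⟩

lemma exists_isOptimal {σ₀ : α → β} (h : IsFeasible lo hi σ₀) (C : α → β → ℝ) :
    ∃ σ, IsOptimal lo hi C σ := by
  classical
  obtain ⟨σ, hσ, hmax⟩ := exists_max_image {τ | IsFeasible lo hi τ} (weight C) ⟨σ₀, by simpa⟩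
  exact ⟨σ, by simpa using hσ, fun τ hτ => hmax τ (by simpa)⟩

end Optimality

end Assignment

open Assignment

section Deviation

variable {n : ℕ} {Km Kp : ℤ} {l u : ℤ → ℕ} {c : Fin n → ℤ → ℝ}

/-- The node `none` stands for "no deviation". -/
def nodeLo (l : ℤ → ℕ) : Option (bands Km Kp) → ℕ := fun o => o.elim 0 fun k => l k

/-- The bound `n + 1` leaves the node `none` unconstrained. -/
def nodeHi (n : ℕ) (u : ℤ → ℕ) : Option (bands Km Kp) → ℕ :=
  fun o => o.elim (n + 1) fun k => u k

def nodeCost (c : Fin n → ℤ → ℝ) : Fin n → Option (bands Km Kp) → ℝ :=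
  fun j o => o.elim 0 fun k => c j k

def toDeviation (σ : Fin n → Option (bands Km Kp)) : Fin n → ℤ → ℕ :=
  fun j k => if (σ j).map (↑) = some k then 1 else 0

lemma toDeviation_coe (σ : Fin n → Option (bands Km Kp)) (j : Fin n) (k : bands Km Kp) :
    toDeviation σ j k = if σ j = some k then 1 else 0 := by
  simp only [toDeviation, ← Option.map_some (f := Subtype.val),
    (Option.map_injective Subtype.val_injective).eq_iff]

lemma sum_toDeviation_eq_load (σ : Fin n → Option (bands Km Kp)) (k : bands Km Kp) :
    ∑ j, toDeviation σ j k = load σ (some k) := by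
  simp only [toDeviation_coe, load, card_filter]

lemma sum_bands_toDeviation_le_one (σ : Fin n → Option (bands Km Kp)) (j : Fin n) :
    ∑ k ∈ bands Km Kp, toDeviation σ j k ≤ 1 := by
  rw [← sum_coe_sort]
  simp only [toDeviation_coe]
  cases σ j <;> simp

lemma memY_toDeviation {σ : Fin n → Option (bands Km Kp)}
    (hσ : IsFeasible (nodeLo l) (nodeHi n u) σ) : memY n Km Kp l u (toDeviation σ) := by
  refine ⟨fun j k _ => by unfold toDeviation; split_ifs <;> simp, fun k hk => ?_,
    sum_bands_toDeviation_le_one σ⟩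
  rw [show k = ((⟨k, hk⟩ : bands Km Kp) : ℤ) from rfl, sum_toDeviation_eq_load]
  exact hσ (some ⟨k, hk⟩)

lemma sum_mul_toDeviation (c : Fin n → ℤ → ℝ) (σ : Fin n → Option (bands Km Kp)) :
    ∑ j, ∑ k ∈ bands Km Kp, c j k * (toDeviation σ j k : ℝ) = weight (nodeCost c) σ := by
  refine sum_congr rfl fun j _ => ?_
  rw [← sum_coe_sort]
  simp only [toDeviation_coe, nodeCost]
  cases σ j <;> simp

/-- Band `k` receives exactly `l k` items, through an embedding of `Σ k, Fin (l k)` into the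
items. -/
lemma exists_isFeasible (hlu : ∀ k ∈ bands Km Kp, l k ≤ u k) (hl : ∑ k ∈ bands Km Kp, l k ≤ n) :
    ∃ σ : Fin n → Option (bands Km Kp), IsFeasible (nodeLo l) (nodeHi n u) σ := by
  classical
  obtain ⟨e⟩ := Function.Embedding.nonempty_of_card_le (α := Σ k : bands Km Kp, Fin (l k))
    (β := Fin n) (by simpa [Fintype.card_sigma, sum_attach _ l] using hl)
  let σ : Fin n → Option (bands Km Kp) := Function.extend e (fun p => some p.1) fun _ => none
  have hfiber : ∀ k, ({j | σ j = some k} : Finset (Fin n)) = ({p | p.1 = k} : Finset _).map e := by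
    intro k
    ext j
    by_cases hj : ∃ p, e p = j
    · obtain ⟨p, rfl⟩ := hj
      simp [σ, e.injective.extend_apply]
    · simp only [σ, Function.extend_apply' _ _ _ hj, mem_filter, mem_map, reduceCtorEq,
        mem_univ, true_and, false_iff, not_exists, not_and]
      exact fun p _ hp => hj ⟨p, hp⟩
  refine ⟨σ, fun o => ?_⟩
  cases o with
  | none => exact ⟨Nat.zero_le _, (card_le_univ _).trans (by simp [nodeHi])⟩
  | some k =>
    rw [load, hfiber, card_map, card_filter_sigma_fst_eq]
    exact ⟨le_rfl, hlu k k.2⟩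

lemma weak_duality {y : Fin n → ℤ → ℕ} (hy : memY n Km Kp l u y) {v w : ℤ → ℝ} {z : Fin n → ℝ}
    (hv : ∀ k ∈ bands Km Kp, 0 ≤ v k) (hw : ∀ k ∈ bands Km Kp, 0 ≤ w k) (hz : ∀ j, 0 ≤ z j)
    (hc : ∀ j, ∀ k ∈ bands Km Kp, c j k ≤ -v k + w k + z j) :
    ∑ j, ∑ k ∈ bands Km Kp, c j k * (y j k : ℝ)
      ≤ -(∑ k ∈ bands Km Kp, (l k : ℝ) * v k) + (∑ k ∈ bands Km Kp, (u k : ℝ) * w k)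
        + ∑ j, z j := by
  obtain ⟨-, hcount, hrow⟩ := hy
  calc ∑ j, ∑ k ∈ bands Km Kp, c j k * (y j k : ℝ)
      ≤ ∑ j, ∑ k ∈ bands Km Kp, (-v k + w k + z j) * (y j k : ℝ) := by
        gcongr with j _ k hk
        exact hc j k hk
    _ = ∑ k ∈ bands Km Kp, (-v k * ∑ j, (y j k : ℝ) + w k * ∑ j, (y j k : ℝ))
        + ∑ j, z j * ∑ k ∈ bands Km Kp, (y j k : ℝ) := by
        simp only [add_mul, sum_add_distrib, mul_sum]
        rw [sum_comm (f := fun j k => -v k * (y j k : ℝ)),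
          sum_comm (f := fun j k => w k * (y j k : ℝ))]
    _ ≤ ∑ k ∈ bands Km Kp, (-((l k : ℝ) * v k) + (u k : ℝ) * w k) + ∑ j, z j := by
        refine add_le_add (sum_le_sum fun k hk => ?_) (sum_le_sum fun j _ => ?_)
        · have hl : (l k : ℝ) ≤ ∑ j, (y j k : ℝ) := by exact_mod_cast (hcount k hk).1
          have hu : ∑ j, (y j k : ℝ) ≤ u k := by exact_mod_cast (hcount k hk).2
          nlinarith [hv k hk, hw k hk]
        · have : ∑ k ∈ bands Km Kp, (y j k : ℝ) ≤ 1 := by exact_mod_cast hrow j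
          exact mul_le_of_le_one_right (hz j) this
    _ = _ := by rw [sum_add_distrib, sum_neg_distrib]

lemma exists_dual_eq_weight {σ : Fin n → Option (bands Km Kp)}
    (hσ : IsOptimal (nodeLo l) (nodeHi n u) (nodeCost c) σ) :
    ∃ (v w : ℤ → ℝ) (z : Fin n → ℝ),
      (∀ k ∈ bands Km Kp, 0 ≤ v k) ∧ (∀ k ∈ bands Km Kp, 0 ≤ w k) ∧ (∀ j, 0 ≤ z j) ∧
      (∀ j, ∀ k ∈ bands Km Kp, c j k ≤ -v k + w k + z j) ∧
      -(∑ k ∈ bands Km Kp, (l k : ℝ) * v k) + (∑ k ∈ bands Km Kp, (u k : ℝ) * w k) + ∑ j, z j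
        = weight (nodeCost c) σ := by
  obtain ⟨p, hbell, hhi, hlo⟩ := hσ.exists_potential
  have hnone : p none ≤ 0 := by
    by_contra! hpos
    have hle := (hhi none hpos).symm.trans_le ((card_le_univ _).trans (Fintype.card_fin n).le)
    simp [nodeHi] at hle
  let P : ℤ → ℝ := fun k => if hk : k ∈ bands Km Kp then p (some ⟨k, hk⟩) else 0
  have hP : ∀ k : bands Km Kp, P k = p (some k) := fun k => dif_pos k.2
  have hprice : ∑ j, p (σ j) = -(∑ k ∈ bands Km Kp, (l k : ℝ) * max (-P k) 0)
      + ∑ k ∈ bands Km Kp, (u k : ℝ) * max (P k) 0 := by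
    rw [sum_price_eq_of_slackness p hhi hlo, Fintype.sum_option, ← sum_coe_sort (bands Km Kp),
      ← sum_coe_sort (bands Km Kp)]
    simp [nodeHi, nodeLo, hP, max_eq_right hnone, sum_sub_distrib]
    ring
  refine ⟨fun k => max (-P k) 0, fun k => max (P k) 0, fun j => nodeCost c j (σ j) - p (σ j),
    fun _ _ => le_max_right _ _, fun _ _ => le_max_right _ _, fun j => ?_, fun j k hk => ?_, ?_⟩
  · have hstep := hbell j none
    have hcost : nodeCost c j (none : Option (bands Km Kp)) = 0 := rfl
    dsimp only
    linarith
  · have hstep := hbell j (some ⟨k, hk⟩)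
    have hcost : nodeCost c j (some ⟨k, hk⟩) = c j k := rfl
    have hsplit := max_zero_sub_eq_self (P k)
    have hPk := hP ⟨k, hk⟩
    dsimp only
    linarith
  · rw [sum_sub_distrib, hprice, weight]
    ring

end Deviation

theorem stmt_5_general (n : ℕ) (Km Kp : ℤ)
    (d : Fin n → ℤ → ℝ)
    (l u : ℤ → ℕ)
    (hlu : ∀ k ∈ bands Km Kp, l k ≤ u k)
    (hl : ∑ k ∈ bands Km Kp, l k ≤ n)
    (x : Fin n → ℝ) :
    ∃ D : ℝ,
      IsGreatest (devSet n Km Kp l u d x) D ∧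
      IsLeast {t : ℝ | ∃ (v w : ℤ → ℝ) (z : Fin n → ℝ),
        (∀ k ∈ bands Km Kp, 0 ≤ v k) ∧ (∀ k ∈ bands Km Kp, 0 ≤ w k) ∧
        (∀ j : Fin n, 0 ≤ z j) ∧
        (∀ j : Fin n, ∀ k ∈ bands Km Kp, d j k * x j ≤ -v k + w k + z j) ∧
        t = -(∑ k ∈ bands Km Kp, (l k : ℝ) * v k) + (∑ k ∈ bands Km Kp, (u k : ℝ) * w k)
            + ∑ j : Fin n, z j} D := by
  obtain ⟨σ₀, hσ₀⟩ := exists_isFeasible (u := u) hlu hl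
  obtain ⟨σ, hσ⟩ := exists_isOptimal hσ₀ (nodeCost fun j k => d j k * x j)
  obtain ⟨v, w, z, hv, hw, hz, hc, hdual⟩ := exists_dual_eq_weight hσ
  have hprimal := sum_mul_toDeviation (fun j k => d j k * x j) σ
  refine ⟨_, ⟨⟨toDeviation σ, memY_toDeviation hσ.1, hprimal.symm⟩, ?_⟩,
    ⟨⟨v, w, z, hv, hw, hz, hc, hdual.symm⟩, ?_⟩⟩
  · rintro _ ⟨y, hy, rfl⟩
    exact (weak_duality hy hv hw hz hc).trans hdual.le
  · rintro _ ⟨v', w', z', hv', hw', hz', hc', rfl⟩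
    exact hprimal ▸ weak_duality (memY_toDeviation hσ.1) hv' hw' hz' hc'

/-- for every `x ≥ 0`, the maximum deviation
`DEV_i(x) = max_{y ∈ Y_i} ∑_j ∑_k d^k_{ij} x_j y_{jk}` equals the minimum of
`-∑_k l_k v_k + ∑_k u_k w_k + ∑_j z_j` over nonnegative `v, w, z` satisfying
`-v_k + w_k + z_j ≥ d^k_{ij} x_j` for all `j ∈ J`, `k ∈ K`, and this minimum is attained. -/
theorem stmt_5 (n : ℕ) (hn : 0 < n) (Km Kp : ℤ) (hKm : Km < 0) (hKp : 0 < Kp)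
    (d : Fin n → ℤ → ℝ) (hd0 : ∀ j : Fin n, d j 0 = 0)
    (l u : ℤ → ℕ)
    (hlu : ∀ k ∈ bands Km Kp, l k ≤ u k)
    (hun : ∀ k ∈ bands Km Kp, u k ≤ n)
    (hu0 : u 0 = n)
    (hl : ∑ k ∈ bands Km Kp, l k ≤ n)
    (x : Fin n → ℝ) (hx : ∀ j, 0 ≤ x j) :
    ∃ D : ℝ,
      IsGreatest (devSet n Km Kp l u d x) D ∧
      IsLeast {t : ℝ | ∃ (v w : ℤ → ℝ) (z : Fin n → ℝ),
        (∀ k ∈ bands Km Kp, 0 ≤ v k) ∧ (∀ k ∈ bands Km Kp, 0 ≤ w k) ∧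
        (∀ j : Fin n, 0 ≤ z j) ∧
        (∀ j : Fin n, ∀ k ∈ bands Km Kp, d j k * x j ≤ -v k + w k + z j) ∧
        t = -(∑ k ∈ bands Km Kp, (l k : ℝ) * v k) + (∑ k ∈ bands Km Kp, (u k : ℝ) * w k)
            + ∑ j : Fin n, z j} D :=
  stmt_5_general n Km Kp d l u hlu hl x
end

section
/- For every x ∈ ℝ^n with x ≥ 0, the robust constraint Σ_{j∈J} ā_{ij} x_j + DEV_i(x) ≤ b_i holds if and only if there exist v, w ∈ ℝ^K_{≥0} and z ∈ ℝ^J_{≥0} such that −v_k + w_k + z_j ≥ d^k_{ij} x_j for all j ∈ J, k ∈ K, and Σ_{j∈J} ā_{ij} x_j − Σ_{k∈K} l_k v_k + Σ_{k∈K} u_k w_k + Σ_{j∈J} z_j ≤ b_i. Consequently, the robust counterpart of the linear program under the multi-band uncertainty set is equivalent to the compact linear program (RLP). -/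
open Finset

/-- The maximum deviation `DEV_i(x) = max_{y ∈ Y_i} ∑_j ∑_k d^k_{ij} x_j y_{jk}`. -/
noncomputable def DEV (n : ℕ) (Km Kp : ℤ) (l u : ℤ → ℕ) (d : Fin n → ℤ → ℝ)
    (x : Fin n → ℝ) : ℝ :=
  sSup {v | ∃ y : Fin n → ℤ → ℕ, memY n Km Kp l u y ∧
    v = ∑ j : Fin n, ∑ k ∈ bands Km Kp, d j k * x j * (y j k : ℝ)}

/-!
`DEV` is the optimum of a transportation-type integer program: item `j` goes to at most one band
`k`, earning `c j k = d j k * x j`, and band `k` receives between `l k` and `u k` items. One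
direction is weak duality. For the other, write `g = w - v`; the best `v, w, z` for a given `g`
leave the piecewise linear function
`F g = ∑ k, max (l k * g k) (u k * g k) + ∑ j, max (0, max_k (c j k - g k))`,
which has a local minimiser (minimise on a box, prefer large coordinates, clip from above).
At a local minimiser the one-sided derivatives of `F` along `∓1_S` are nonnegative; these are
Hall-type conditions for an assignment sending each item to a band (or to no band) attaining its
maximum, filling bands with `g k > 0` to `u k` and bands with `g k < 0` to `l k`. Hall's theorem
provides it, and complementary slackness turns its value into `F g`.
-/

open Filter Topology

theorem eventually_add_mul_le_add_mul {a m b D : ℝ} (ha : a ≤ m) (hb : a = m → b ≤ D) :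
    ∀ᶠ t in 𝓝[>] (0 : ℝ), a + t * b ≤ m + t * D := by
  rcases ha.lt_or_eq with ha | rfl
  · have hlt : ∀ᶠ t in 𝓝 (0 : ℝ), a + t * b < m + t * D :=
      ContinuousAt.eventually_lt (by fun_prop) (by fun_prop) (by simpa using ha)
    exact (eventually_nhdsWithin_of_eventually_nhds hlt).mono fun t ht => ht.le
  · filter_upwards [self_mem_nhdsWithin] with t (ht : 0 < t)
    gcongr
    exact hb rfl

theorem eventually_sum_le_add_mul {α : Type*} [Fintype α] {l : Filter ℝ} {f : α → ℝ → ℝ}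
    {a D : α → ℝ} (h : ∀ i, ∀ᶠ t in l, f i t ≤ a i + t * D i) :
    ∀ᶠ t in l, ∑ i, f i t ≤ ∑ i, a i + t * ∑ i, D i := by
  filter_upwards [eventually_all.2 h] with t ht
  rw [mul_sum, ← sum_add_distrib]
  exact sum_le_sum fun i _ => ht i

theorem IsLocalMin.nonneg_of_eventually_le {E : Type*} [AddCommGroup E] [Module ℝ E]
    [TopologicalSpace E] [ContinuousAdd E] [ContinuousSMul ℝ E] {f : E → ℝ} {g : E}
    (hg : IsLocalMin f g) (e : E) {D : ℝ}
    (h : ∀ᶠ t in 𝓝[>] (0 : ℝ), f (g + t • e) ≤ f g + t * D) : 0 ≤ D := by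
  have hpath : Tendsto (fun t : ℝ => g + t • e) (𝓝[>] 0) (𝓝 g) :=
    tendsto_nhdsWithin_of_tendsto_nhds <| by
      simpa using ((continuous_id.smul continuous_const).const_add g).tendsto (0 : ℝ)
  obtain ⟨t, ht, hmin, hle⟩ :=
    ((eventually_mem_nhdsWithin (a := (0 : ℝ)) (s := Set.Ioi 0)).and
      ((hpath.eventually hg).and h)).exists
  exact nonneg_of_mul_nonneg_right (by linarith) (ht : (0 : ℝ) < t)

theorem card_filter_sigma_fin {ι : Type*} [Fintype ι] [DecidableEq ι] (U : ι → ℕ) (S : Finset ι)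
    (P : ∀ k, Fin (U k) → Prop) [∀ k, DecidablePred (P k)] :
    #{p : Σ k, Fin (U k) | p.1 ∈ S ∧ P p.1 p.2} = ∑ k ∈ S, #{i | P k i} := by
  rw [← card_sigma]
  congr 1
  ext ⟨k, i⟩
  simp

section Hall

variable {J ι : Type*} [Fintype J] [Fintype ι] [DecidableEq J] [DecidableEq ι]

def load (σ : J → Option ι) (k : ι) : ℕ := #{j | σ j = some k}

variable (N : J → Finset (Option ι)) (L U : ι → ℕ)

/-- Hall's theorem is applied with agents `J ⊕ slots` and places `slots ⊕ J`. Band `k` has the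
slots `⟨k, i⟩`, `i < U k`, mandatory when `i < L k`; the place `Sum.inr j` means that item `j`
stays unassigned. Each slot also has a dummy agent, which may take any non-mandatory slot or any
unassigned place, so that a perfect matching leaves no mandatory slot empty. -/
def CanFill : J ⊕ (Σ k, Fin (U k)) → (Σ k, Fin (U k)) ⊕ J → Prop
  | .inl j, .inl p => some p.1 ∈ N j
  | .inl j, .inr j' => j' = j ∧ none ∈ N j
  | .inr _, .inl p => L p.1 ≤ p.2
  | .inr _, .inr _ => True

instance : DecidableRel (CanFill N L U) := fun a x => by
  cases a <;> cases x <;> unfold CanFill <;> infer_instance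

variable {N L U}

theorem sum_add_card_le_card_canFill (A : Finset (J ⊕ Σ k, Fin (U k))) :
    ∑ k ∈ {k | ∃ j ∈ A.toLeft, some k ∈ N j}, U k + #{j ∈ A.toLeft | none ∈ N j} ≤
      #{x | ∃ a ∈ A, CanFill N L U a x} := by
  set NS : Finset ι := {k | ∃ j ∈ A.toLeft, some k ∈ N j}
  have hslots : #{p : Σ k, Fin (U k) | p.1 ∈ NS ∧ True} = ∑ k ∈ NS, U k := by
    simpa using card_filter_sigma_fin U NS fun _ _ => True
  rw [← hslots, ← card_map ⟨Sum.inl, Sum.inl_injective⟩,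
    ← card_map (s := {j ∈ A.toLeft | none ∈ N j}) ⟨Sum.inr, Sum.inr_injective⟩,
    ← card_union_of_disjoint (by simp [disjoint_left])]
  refine card_le_card fun x hx => ?_
  simp only [mem_filter, mem_univ, true_and]
  rcases mem_union.1 hx with hx | hx
  · obtain ⟨p, hp, rfl⟩ := mem_map.1 hx
    obtain ⟨j, hj, hk⟩ := (mem_filter.1 (mem_filter.1 hp).2.1).2
    exact ⟨.inl j, mem_toLeft.1 hj, hk⟩
  · obtain ⟨j, hj, rfl⟩ := mem_map.1 hx
    obtain ⟨hjA, hj⟩ := mem_filter.1 hj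
    exact ⟨.inl j, mem_toLeft.1 hjA, rfl, hj⟩

/-- A dummy agent reaches every place except the mandatory slots of the bands no item of `A`
can use. -/
theorem card_add_card_le_card_canFill {A : Finset (J ⊕ Σ k, Fin (U k))} {p₀ : Σ k, Fin (U k)}
    (hp₀ : p₀ ∈ A.toRight) :
    Fintype.card (Σ k, Fin (U k)) + Fintype.card J ≤
      #{x | ∃ a ∈ A, CanFill N L U a x} +
        ∑ k ∈ ({k | ∃ j ∈ A.toLeft, some k ∈ N j} : Finset ι)ᶜ, L k := by
  set NS : Finset ι := {k | ∃ j ∈ A.toLeft, some k ∈ N j}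
  set Mand : Finset (Σ k, Fin (U k)) := {p | p.1 ∈ NSᶜ ∧ (p.2 : ℕ) < L p.1}
  have hMand : #Mand ≤ ∑ k ∈ NSᶜ, L k := by
    refine (card_filter_sigma_fin U NSᶜ fun k (i : Fin (U k)) => (i : ℕ) < L k).trans_le ?_
    exact sum_le_sum fun k _ => by simp [Fin.card_filter_val_lt]
  refine le_trans ?_ (Nat.add_le_add_left hMand _)
  rw [← Fintype.card_sum, ← card_univ, ← card_map (s := Mand) ⟨Sum.inl, Sum.inl_injective⟩]
  refine (card_le_card fun x _ => ?_).trans (card_union_le _ _)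
  have hdummy : ∀ x, CanFill N L U (.inr p₀) x →
      x ∈ ({x | ∃ a ∈ A, CanFill N L U a x} : Finset _) :=
    fun x hx => mem_filter.2 ⟨mem_univ _, .inr p₀, mem_toRight.1 hp₀, hx⟩
  rcases x with p | j
  · by_cases hp : p.1 ∈ NS
    · obtain ⟨j, hj, hk⟩ := (mem_filter.1 hp).2
      exact mem_union_left _ (mem_filter.2 ⟨mem_univ _, .inl j, mem_toLeft.1 hj, hk⟩)
    · by_cases hLp : L p.1 ≤ p.2
      · exact mem_union_left _ (hdummy _ hLp)
      · exact mem_union_right _ (mem_map_of_mem _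
          (mem_filter.2 ⟨mem_univ _, mem_compl.2 hp, not_le.1 hLp⟩))
  · exact mem_union_left _ (hdummy _ trivial)

theorem card_le_card_canFill (hL : ∀ S : Finset ι, ∑ k ∈ S, L k ≤ #{j | ∃ k ∈ S, some k ∈ N j})
    (hU : ∀ S : Finset ι, #{j | N j ⊆ S.image some} ≤ ∑ k ∈ S, U k)
    (A : Finset (J ⊕ Σ k, Fin (U k))) : #A ≤ #{x | ∃ a ∈ A, CanFill N L U a x} := by
  set NS : Finset ι := {k | ∃ j ∈ A.toLeft, some k ∈ N j}
  have hNS : ∀ j ∈ A.toLeft, ∀ k, some k ∈ N j → k ∈ NS := fun j hj k hk =>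
    mem_filter.2 ⟨mem_univ _, j, hj, hk⟩
  rw [← card_toLeft_add_card_toRight]
  rcases A.toRight.eq_empty_or_nonempty with hD | ⟨p₀, hp₀⟩
  · have hforced : #{j ∈ A.toLeft | none ∉ N j} ≤ ∑ k ∈ NS, U k := by
      refine (card_le_card fun j hj => ?_).trans (hU NS)
      obtain ⟨hjA, hj⟩ := mem_filter.1 hj
      refine mem_filter.2 ⟨mem_univ _, fun o ho => ?_⟩
      cases o with
      | none => exact absurd ho hj
      | some k => exact mem_image_of_mem _ (hNS j hjA k ho)
    have : ∑ k ∈ NS, U k + #{j ∈ A.toLeft | none ∈ N j} ≤ #{x | ∃ a ∈ A, CanFill N L U a x} :=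
      sum_add_card_le_card_canFill A
    have := card_filter_add_card_filter_not (s := A.toLeft) (fun j => none ∈ N j)
    rw [hD, card_empty]
    omega
  · have hout : ∑ k ∈ NSᶜ, L k ≤ #A.toLeftᶜ := by
      refine (hL NSᶜ).trans (card_le_card fun j hj => ?_)
      obtain ⟨k, hk, hkj⟩ := (mem_filter.1 hj).2
      exact mem_compl.2 fun hjA => mem_compl.1 hk (hNS j hjA k hkj)
    rw [card_compl] at hout
    have : Fintype.card (Σ k, Fin (U k)) + Fintype.card J ≤
        #{x | ∃ a ∈ A, CanFill N L U a x} + ∑ k ∈ NSᶜ, L k :=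
      card_add_card_le_card_canFill hp₀
    have := card_le_univ A.toRight
    have := card_le_univ A.toLeft
    omega

theorem exists_assignment_of_hall (hLU : ∀ k, L k ≤ U k)
    (hL : ∀ S : Finset ι, ∑ k ∈ S, L k ≤ #{j | ∃ k ∈ S, some k ∈ N j})
    (hU : ∀ S : Finset ι, #{j | N j ⊆ S.image some} ≤ ∑ k ∈ S, U k) :
    ∃ σ : J → Option ι, (∀ j, σ j ∈ N j) ∧ ∀ k, L k ≤ load σ k ∧ load σ k ≤ U k := by
  obtain ⟨f, hf, hfill⟩ := (Fintype.all_card_le_filter_rel_iff_exists_injective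
    (CanFill N L U)).1 (card_le_card_canFill hL hU)
  have hsurj : Function.Surjective f :=
    ((Fintype.bijective_iff_injective_and_card f).2 ⟨hf, by simp [add_comm]⟩).2
  set σ : J → Option ι := fun j => (f (.inl j)).elim (fun p => some p.1) fun _ => none
  set slot : ∀ k, Fin (U k) ↪ (Σ k, Fin (U k)) ⊕ J := fun k =>
    ⟨fun i => .inl ⟨k, i⟩, fun i i' h => by simpa using h⟩
  refine ⟨σ, fun j => ?_, fun k => ⟨?_, ?_⟩⟩
  · have := hfill (.inl j)
    rcases h : f (.inl j) with p | j' <;> rw [h] at this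
    · have hp : some p.1 ∈ N j := this
      simpa [σ, h] using hp
    · have hj : j' = j ∧ none ∈ N j := this
      simpa [σ, h] using hj.2
  · calc L k = #({i | (i : ℕ) < L k} : Finset (Fin (U k))) := by
          simp [Fin.card_filter_val_lt, hLU k]
      _ = #(({i | (i : ℕ) < L k} : Finset (Fin (U k))).map (slot k)) := (card_map _).symm
      _ ≤ #(({j | σ j = some k} : Finset J).image fun j => f (.inl j)) := by
          refine card_le_card fun x hx => ?_
          obtain ⟨i, hi, rfl⟩ := mem_map.1 hx
          obtain ⟨a, ha⟩ := hsurj (slot k i)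
          rcases a with j | q
          · exact mem_image.2 ⟨j, by simp only [mem_filter, σ, ha]; exact ⟨mem_univ _, rfl⟩, ha⟩
          · have := hfill (.inr q)
            rw [ha] at this
            exact absurd (this : L k ≤ (i : ℕ)) (not_le.2 (mem_filter.1 hi).2)
      _ ≤ load σ k := card_image_le
  · calc load σ k = #(({j | σ j = some k} : Finset J).image fun j => f (.inl j)) :=
          (card_image_of_injective _ (hf.comp Sum.inl_injective)).symm
      _ ≤ #((univ : Finset (Fin (U k))).map (slot k)) := by
          refine card_le_card fun x hx => ?_
          obtain ⟨j, hj, rfl⟩ := mem_image.1 hx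
          rcases h : f (.inl j) with ⟨k', i⟩ | j'
          · obtain rfl : k' = k := by simpa [σ, h] using (mem_filter.1 hj).2
            exact mem_map_of_mem _ (mem_univ i)
          · simp [σ, h] at hj
      _ = U k := by simp

end Hall

noncomputable def bandCost (a b s : ℝ) : ℝ := max (a * s) (b * s)

theorem bandCost_of_nonneg {a b s : ℝ} (hab : a ≤ b) (hs : 0 ≤ s) : bandCost a b s = b * s :=
  max_eq_right (by gcongr)

theorem bandCost_of_nonpos {a b s : ℝ} (hab : a ≤ b) (hs : s ≤ 0) : bandCost a b s = a * s :=
  max_eq_left (mul_le_mul_of_nonpos_right hab hs)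

theorem bandCost_eq_sub {a b : ℝ} (hab : a ≤ b) (s : ℝ) :
    bandCost a b s = b * max s 0 - a * max (-s) 0 := by
  rcases le_total 0 s with hs | hs
  · simp [bandCost_of_nonneg hab hs, hs]
  · simp [bandCost_of_nonpos hab hs, hs]

theorem bandCost_mono {a b : ℝ} (ha : 0 ≤ a) (hb : 0 ≤ b) : Monotone (bandCost a b) :=
  fun _ _ h => max_le_max (by gcongr) (by gcongr)

theorem eventually_bandCost_le {a b s e D : ℝ} (ha : a * s = bandCost a b s → a * e ≤ D)
    (hb : b * s = bandCost a b s → b * e ≤ D) :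
    ∀ᶠ t in 𝓝[>] (0 : ℝ), bandCost a b (s + t * e) ≤ bandCost a b s + t * D := by
  filter_upwards [eventually_add_mul_le_add_mul (le_max_left _ _) ha,
    eventually_add_mul_le_add_mul (le_max_right _ _) hb] with t hta htb
  unfold bandCost at *
  refine max_le ?_ ?_ <;> linarith

section DualFunction

variable {J ι : Type*} (c : J → ι → ℝ)

/-- `none` stands for leaving item `j` unassigned. -/
def reducedCost (g : ι → ℝ) (j : J) : Option ι → ℝ
  | none => 0
  | some k => c j k - g k

@[simp] theorem reducedCost_none (g : ι → ℝ) (j : J) : reducedCost c g j none = 0 := rfl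

@[simp] theorem reducedCost_some (g : ι → ℝ) (j : J) (k : ι) :
    reducedCost c g j (some k) = c j k - g k := rfl

theorem reducedCost_add_smul (g e : ι → ℝ) (t : ℝ) (j : J) (o : Option ι) :
    reducedCost c (g + t • e) j o = reducedCost c g j o + t * -o.elim 0 e := by
  cases o <;> simp; ring

variable [Fintype ι]

noncomputable def slack (g : ι → ℝ) (j : J) : ℝ :=
  univ.sup' univ_nonempty (reducedCost c g j)

noncomputable def tight (g : ι → ℝ) (j : J) : Finset (Option ι) :=
  {o | reducedCost c g j o = slack c g j}

variable {c}

theorem reducedCost_le_slack (g : ι → ℝ) (j : J) (o : Option ι) :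
    reducedCost c g j o ≤ slack c g j :=
  le_sup' (reducedCost c g j) (mem_univ o)

theorem slack_nonneg (g : ι → ℝ) (j : J) : 0 ≤ slack c g j :=
  reducedCost_le_slack g j none

theorem mem_tight {g : ι → ℝ} {j : J} {o : Option ι} :
    o ∈ tight c g j ↔ reducedCost c g j o = slack c g j := by
  simp [tight]

theorem eventually_slack_le {g : ι → ℝ} {j : J} (e : ι → ℝ) {D : ℝ}
    (hD : ∀ o ∈ tight c g j, -o.elim 0 e ≤ D) :
    ∀ᶠ t in 𝓝[>] (0 : ℝ), slack c (g + t • e) j ≤ slack c g j + t * D := by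
  filter_upwards [eventually_all.2 fun o => eventually_add_mul_le_add_mul
    (reducedCost_le_slack g j o) fun h => hD o (mem_tight.2 h)] with t ht
  exact sup'_le _ _ fun o _ => (reducedCost_add_smul c g e t j o).symm ▸ ht o

variable (c) [Fintype J]

/-- For `l ≤ u`, the least value of `-∑ l v + ∑ u w + ∑ z` over the dual feasible `v, w, z`
with `w - v = g` (see `bandCost_eq_sub`). -/
noncomputable def dualObj (l u : ι → ℕ) (g : ι → ℝ) : ℝ :=
  ∑ k, bandCost (l k) (u k) (g k) + ∑ j, slack c g j

variable {c}

theorem continuous_dualObj (l u : ι → ℕ) : Continuous (dualObj c l u) := by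
  have hr : ∀ j o, Continuous fun g : ι → ℝ => reducedCost c g j o := by
    rintro j (_ | k) <;> simp <;> fun_prop
  unfold dualObj bandCost slack
  exact (continuous_finsetSum _ fun k _ => by fun_prop).add <|
    continuous_finsetSum _ fun j _ => Continuous.finset_sup'_apply _ fun o _ => hr j o

theorem dualObj_min_le {M : ℝ} (hM : ∀ j k, c j k ≤ M) (l u : ι → ℕ) (g : ι → ℝ) :
    dualObj c l u (fun k => min (g k) M) ≤ dualObj c l u g := by
  refine add_le_add (sum_le_sum fun k _ => bandCost_mono (by positivity) (by positivity)
    (min_le_left _ _)) (sum_le_sum fun j _ => sup'_le _ _ ?_)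
  rintro (_ | k) -
  · exact slack_nonneg g j
  · rcases le_total (g k) M with h | h
    · simpa [min_eq_left h] using reducedCost_le_slack g j (some k)
    · simp only [reducedCost_some, min_eq_right h]
      linarith [hM j k, slack_nonneg (c := c) g j]

/-- If some coordinate of `g` is very low, raising by `1` every coordinate within `2M + 1` of it
lowers each slack by `1`, while the band costs grow by at most `∑ l ≤ card J`. -/
theorem dualObj_raise_le {M : ℝ} (hM : ∀ j k, |c j k| ≤ M) {l u : ι → ℕ}
    (hlu : ∀ k, l k ≤ u k) (hl : ∑ k, l k ≤ Fintype.card J) {g : ι → ℝ} {k₀ : ι}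
    (hk₀ : g k₀ ≤ -(2 * M + 2)) :
    dualObj c l u (fun k => if g k ≤ g k₀ + 2 * M + 1 then g k + 1 else g k) ≤ dualObj c l u g := by
  set low : ι → Prop := fun k => g k ≤ g k₀ + 2 * M + 1
  have hband : ∀ k, bandCost (l k) (u k) (if low k then g k + 1 else g k)
      = bandCost (l k) (u k) (g k) + if low k then (l k : ℝ) else 0 := by
    intro k
    split_ifs with hk
    · have : g k + 1 ≤ 0 := by simp only [low] at hk; linarith
      rw [bandCost_of_nonpos (by exact_mod_cast hlu k) this,
        bandCost_of_nonpos (by exact_mod_cast hlu k) (by linarith)]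
      ring
    · ring
  have hslack : ∀ j, slack c (fun k => if low k then g k + 1 else g k) j ≤ slack c g j - 1 := by
    intro j
    have hk₀j : c j k₀ - g k₀ ≤ slack c g j := reducedCost_le_slack g j (some k₀)
    have := abs_le.1 (hM j k₀)
    refine sup'_le _ _ ?_
    rintro (_ | k) -
    · simp; linarith
    · have := abs_le.1 (hM j k)
      simp only [reducedCost_some]
      split_ifs with hk
      · have hk' : c j k - g k ≤ slack c g j := reducedCost_le_slack g j (some k)
        linarith
      · simp only [low, not_le] at hk; linarith
  have hlow : ∑ k, (if low k then (l k : ℝ) else 0) ≤ Fintype.card J := by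
    calc ∑ k, (if low k then (l k : ℝ) else 0) ≤ ∑ k, (l k : ℝ) :=
          sum_le_sum fun k _ => by split_ifs <;> simp
      _ ≤ Fintype.card J := by exact_mod_cast hl
  calc dualObj c l u (fun k => if low k then g k + 1 else g k)
      ≤ ∑ k, (bandCost (l k) (u k) (g k) + if low k then (l k : ℝ) else 0)
        + ∑ j, (slack c g j - 1) := by
        exact add_le_add (sum_congr rfl fun k _ => hband k).le (sum_le_sum fun j _ => hslack j)
    _ ≤ dualObj c l u g := by
        simp only [dualObj, sum_add_distrib, sum_sub_distrib, sum_const, card_univ, nsmul_one]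
        linarith

theorem exists_isLocalMin_dualObj {l u : ι → ℕ} (hlu : ∀ k, l k ≤ u k)
    (hl : ∑ k, l k ≤ Fintype.card J) : ∃ g, IsLocalMin (dualObj c l u) g := by
  obtain ⟨M, hM0, hM⟩ : ∃ M : ℝ, 0 ≤ M ∧ ∀ j k, |c j k| ≤ M :=
    ⟨∑ j, ∑ k, |c j k|, by positivity, fun j k =>
      (single_le_sum (f := fun k => |c j k|) (fun _ _ => abs_nonneg _) (mem_univ k)).trans
        (single_le_sum (f := fun j => ∑ k, |c j k|) (fun _ _ => by positivity) (mem_univ j))⟩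
  set R := 2 * M + 3
  set K : Set (ι → ℝ) := Set.univ.pi fun _ => Set.Icc (-R) R
  have hK : IsCompact K := isCompact_univ_pi fun _ => isCompact_Icc
  have hF := continuous_dualObj (c := c) l u
  obtain ⟨g₀, hg₀K, hg₀⟩ :=
    hK.exists_isMinOn ⟨0, fun k _ => ⟨by simp [R]; linarith, by simp [R]; linarith⟩⟩ hF.continuousOn
  -- Among the minimisers on `K`, one with the largest coordinate sum has no very low coordinate.
  set C := K ∩ {g | dualObj c l u g ≤ dualObj c l u g₀}
  have hC : IsCompact C := hK.inter_right (isClosed_le hF continuous_const)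
  obtain ⟨gs, ⟨hgsK, hgsmin⟩, hgsmax⟩ := hC.exists_isMaxOn ⟨g₀, hg₀K, le_refl (dualObj c l u g₀)⟩
    (continuous_finsetSum univ fun k _ => continuous_apply k).continuousOn
  have hlow : ∀ k, -(2 * M + 2) < gs k := by
    by_contra! ⟨k₀, hk₀⟩
    set g' := fun k => if gs k ≤ gs k₀ + 2 * M + 1 then gs k + 1 else gs k
    have hg'K : g' ∈ K := fun k _ => by
      obtain ⟨h₁, h₂⟩ := hgsK k (Set.mem_univ k)
      simp only [g']
      split_ifs with h <;> constructor <;> linarith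
    have hle : ∑ k, g' k ≤ ∑ k, gs k :=
      hgsmax ⟨hg'K, (dualObj_raise_le hM hlu hl hk₀).trans hgsmin⟩
    have hlt : ∑ k, gs k < ∑ k, g' k :=
      sum_lt_sum (fun k _ => by simp only [g']; split_ifs <;> linarith)
        ⟨k₀, mem_univ _, by simp only [g']; rw [if_pos (by linarith)]; linarith⟩
    linarith
  -- Clipping at `M` keeps `gs` a minimiser on `K` and moves it into the interior of `K`.
  refine ⟨fun k => min (gs k) M, IsMinOn.isLocalMin (s := K) ?_ ?_⟩
  · exact fun g hg => ((dualObj_min_le (fun j k => (abs_le.1 (hM j k)).2) l u gs).trans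
      hgsmin).trans (hg₀ hg)
  · refine set_pi_mem_nhds Set.finite_univ fun k _ => Icc_mem_nhds ?_ ?_
    · exact lt_min (by linarith [hlow k]) (by linarith)
    · exact (min_le_right _ _).trans_lt (by linarith)

theorem IsLocalMin.dualObj_nonneg {l u : ι → ℕ} {g : ι → ℝ} (hg : IsLocalMin (dualObj c l u) g)
    (e : ι → ℝ) {Dband : ι → ℝ} {Dslack : J → ℝ}
    (hband : ∀ k, ∀ᶠ t in 𝓝[>] (0 : ℝ),
      bandCost (l k) (u k) (g k + t * e k) ≤ bandCost (l k) (u k) (g k) + t * Dband k)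
    (hslack : ∀ j, ∀ o ∈ tight c g j, -o.elim 0 e ≤ Dslack j) :
    0 ≤ ∑ k, Dband k + ∑ j, Dslack j := by
  refine hg.nonneg_of_eventually_le e ?_
  filter_upwards [eventually_sum_le_add_mul hband,
    eventually_sum_le_add_mul fun j => eventually_slack_le e (hslack j)] with t h₁ h₂
  simp only [dualObj, Pi.add_apply, Pi.smul_apply, smul_eq_mul, mul_add] at h₁ ⊢
  linarith

end DualFunction

section StrongDuality

variable {J ι : Type*} [Fintype J] [Fintype ι] [DecidableEq ι] {c : J → ι → ℝ} {l u : ι → ℕ}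
  {g : ι → ℝ}

variable (l u g) in
/-- Complementary slackness forces a band with `g k > 0` to receive exactly `u k` items and one
with `g k < 0` exactly `l k`. -/
noncomputable def loadLower (k : ι) : ℕ := if 0 < g k then u k else l k

variable (l u g) in
noncomputable def loadUpper (k : ι) : ℕ := if g k < 0 then l k else u k

theorem IsLocalMin.sum_loadLower_le (hg : IsLocalMin (dualObj c l u) g) (hlu : ∀ k, l k ≤ u k)
    (S : Finset ι) : ∑ k ∈ S, loadLower l u g k ≤ #{j | ∃ k ∈ S, some k ∈ tight c g j} := by
  have := hg.dualObj_nonneg (fun k => if k ∈ S then -1 else 0)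
    (Dband := fun k => if k ∈ S then -(loadLower l u g k : ℝ) else 0)
    (Dslack := fun j => if ∃ k ∈ S, some k ∈ tight c g j then 1 else 0) ?_ ?_
  · rw [sum_ite_mem, univ_inter, sum_boole, sum_neg_distrib] at this
    rw [← Nat.cast_le (α := ℝ)]
    push_cast
    linarith
  · intro k
    split_ifs with hk
    · refine eventually_bandCost_le (fun h => ?_) (fun _ => ?_) <;>
        simp only [loadLower] <;> split_ifs with hpos
      · have h' : (u k : ℝ) * g k ≤ l k * g k := by rw [h]; exact le_max_right _ _
        linarith [le_of_mul_le_mul_right h' hpos]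
      · simp
      · simp
      · simpa using hlu k
    · simp
  · rintro j (_ | k) ho
    · simp only [Option.elim_none, neg_zero]
      split_ifs <;> norm_num
    · simp only [Option.elim_some]
      split_ifs with hk hS
      · norm_num
      · exact absurd ⟨k, hk, ho⟩ hS
      · norm_num
      · norm_num

theorem IsLocalMin.card_le_sum_loadUpper (hg : IsLocalMin (dualObj c l u) g)
    (hlu : ∀ k, l k ≤ u k) (S : Finset ι) :
    #{j | tight c g j ⊆ S.image some} ≤ ∑ k ∈ S, loadUpper l u g k := by
  have := hg.dualObj_nonneg (fun k => if k ∈ S then 1 else 0)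
    (Dband := fun k => if k ∈ S then (loadUpper l u g k : ℝ) else 0)
    (Dslack := fun j => -if tight c g j ⊆ S.image some then 1 else 0) ?_ ?_
  · rw [sum_ite_mem, univ_inter, sum_neg_distrib, sum_boole] at this
    rw [← Nat.cast_le (α := ℝ)]
    push_cast
    linarith
  · intro k
    split_ifs with hk
    · refine eventually_bandCost_le (fun _ => ?_) (fun h => ?_) <;>
        simp only [loadUpper] <;> split_ifs with hneg
      · simp
      · simpa using hlu k
      · have h' : (l k : ℝ) * g k ≤ u k * g k := by rw [h]; exact le_max_left _ _
        nlinarith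
      · simp
    · simp
  · rintro j (_ | k) ho
    · split_ifs with hS
      · exact absurd (hS ho) (by simp)
      · simp
    · simp only [Option.elim_some]
      split_ifs with hk hS hS
      · simp
      · simp
      · exact absurd (by simpa using hS ho) hk
      · simp

theorem sum_elim_eq_sum_mul_load (σ : J → Option ι) (f : ι → ℝ) :
    ∑ j, (σ j).elim 0 f = ∑ k, f k * load σ k := by
  simp only [load, card_filter, Nat.cast_sum, mul_sum]
  rw [sum_comm]
  refine sum_congr rfl fun j _ => ?_
  cases σ j <;> simp

theorem sum_elim_eq_dualObj (hlu : ∀ k, l k ≤ u k) {σ : J → Option ι}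
    (hσ : ∀ j, σ j ∈ tight c g j)
    (hload : ∀ k, loadLower l u g k ≤ load σ k ∧ load σ k ≤ loadUpper l u g k) :
    ∑ j, (σ j).elim 0 (c j) = dualObj c l u g := by
  have hj : ∀ j, (σ j).elim 0 (c j) = slack c g j + (σ j).elim 0 g := fun j => by
    rw [← mem_tight.1 (hσ j)]
    cases σ j <;> simp
  have hk : ∀ k, g k * load σ k = bandCost (l k) (u k) (g k) := fun k => by
    obtain ⟨h₁, h₂⟩ := hload k
    simp only [loadLower, loadUpper] at h₁ h₂
    rcases lt_trichotomy (g k) 0 with hneg | hzero | hpos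
    · rw [if_neg (not_lt.2 hneg.le)] at h₁
      rw [if_pos hneg] at h₂
      rw [le_antisymm h₂ h₁, bandCost_of_nonpos (by exact_mod_cast hlu k) hneg.le, mul_comm]
    · simp [hzero, bandCost]
    · rw [if_pos hpos] at h₁
      rw [if_neg (not_lt.2 hpos.le)] at h₂
      rw [le_antisymm h₂ h₁, bandCost_of_nonneg (by exact_mod_cast hlu k) hpos.le, mul_comm]
  rw [sum_congr rfl fun j _ => hj j, sum_add_distrib, sum_elim_eq_sum_mul_load, dualObj, add_comm,
    sum_congr rfl fun k _ => hk k]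

theorem exists_assignment_eq_dualObj [DecidableEq J] (c : J → ι → ℝ) (hlu : ∀ k, l k ≤ u k)
    (hl : ∑ k, l k ≤ Fintype.card J) :
    ∃ (g : ι → ℝ) (σ : J → Option ι), (∀ k, l k ≤ load σ k ∧ load σ k ≤ u k) ∧
      ∑ j, (σ j).elim 0 (c j) = dualObj c l u g := by
  obtain ⟨g, hg⟩ := exists_isLocalMin_dualObj (c := c) hlu hl
  have hl_le : ∀ k, l k ≤ loadLower l u g k := fun k => by
    unfold loadLower; split_ifs; exacts [hlu k, le_rfl]
  have hle_u : ∀ k, loadUpper l u g k ≤ u k := fun k => by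
    unfold loadUpper; split_ifs; exacts [hlu k, le_rfl]
  have hLU : ∀ k, loadLower l u g k ≤ loadUpper l u g k := fun k => by
    unfold loadLower loadUpper
    split_ifs with h₁ h₂ <;> first | exact hlu k | exact le_rfl | exact absurd h₂ (by linarith)
  obtain ⟨σ, hσ, hload⟩ :=
    exists_assignment_of_hall hLU (hg.sum_loadLower_le hlu) (hg.card_le_sum_loadUpper hlu)
  exact ⟨g, σ, fun k => ⟨(hl_le k).trans (hload k).1, (hload k).2.trans (hle_u k)⟩,
    sum_elim_eq_dualObj hlu hσ hload⟩

end StrongDuality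

theorem sum_sum_mul_le_of_dual_feasible {κ J : Type*} [Fintype J] {B : Finset κ}
    {c y : J → κ → ℝ} {l u v w : κ → ℝ} {z : J → ℝ} (hy : ∀ j, ∀ k ∈ B, 0 ≤ y j k)
    (hcol : ∀ k ∈ B, l k ≤ ∑ j, y j k ∧ ∑ j, y j k ≤ u k) (hrow : ∀ j, ∑ k ∈ B, y j k ≤ 1)
    (hv : ∀ k ∈ B, 0 ≤ v k) (hw : ∀ k ∈ B, 0 ≤ w k) (hz : ∀ j, 0 ≤ z j)
    (hc : ∀ j, ∀ k ∈ B, c j k ≤ -v k + w k + z j) :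
    ∑ j, ∑ k ∈ B, c j k * y j k ≤ -∑ k ∈ B, l k * v k + ∑ k ∈ B, u k * w k + ∑ j, z j := by
  calc ∑ j, ∑ k ∈ B, c j k * y j k
      ≤ ∑ j, ∑ k ∈ B, (-v k + w k + z j) * y j k :=
        sum_le_sum fun j _ => sum_le_sum fun k hk =>
          mul_le_mul_of_nonneg_right (hc j k hk) (hy j k hk)
    _ = ∑ k ∈ B, -v k * ∑ j, y j k + ∑ k ∈ B, w k * ∑ j, y j k + ∑ j, z j * ∑ k ∈ B, y j k := by
        simp only [add_mul, sum_add_distrib, mul_sum]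
        rw [sum_comm (s := univ), sum_comm (s := univ) (t := B)]
    _ ≤ ∑ k ∈ B, -(l k * v k) + ∑ k ∈ B, u k * w k + ∑ j, z j := by
        refine add_le_add (add_le_add ?_ ?_) ?_ <;> refine sum_le_sum fun i hi => ?_
        · nlinarith [hv i hi, (hcol i hi).1]
        · nlinarith [hw i hi, (hcol i hi).2]
        · nlinarith [hz i, hrow i]
    _ = _ := by rw [sum_neg_distrib]

section Bands

variable {κ J : Type*} [DecidableEq κ] (B : Finset κ)

def assignmentMatrix (σ : J → Option B) (j : J) (k : κ) : ℕ :=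
  if (σ j).map (↑) = some k then 1 else 0

variable {B}

theorem sum_mul_assignmentMatrix (f : κ → ℝ) (σ : J → Option B) (j : J) :
    ∑ k ∈ B, f k * assignmentMatrix B σ j k = (σ j).elim 0 fun k => f k := by
  rcases h : σ j with _ | k
  · simp [assignmentMatrix, h]
  · simp [assignmentMatrix, h, k.2]

theorem sum_assignmentMatrix_le_one (σ : J → Option B) (j : J) :
    ∑ k ∈ B, assignmentMatrix B σ j k ≤ 1 := by
  rcases h : σ j with _ | k
  · simp [assignmentMatrix, h]
  · simp [assignmentMatrix, h, k.2]

theorem sum_assignmentMatrix_eq_load [Fintype J] (σ : J → Option B) (k : B) :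
    ∑ j, assignmentMatrix B σ j k = load σ k := by
  rw [load, card_filter]
  refine sum_congr rfl fun j _ => ?_
  simp only [assignmentMatrix, Option.map_eq_some_iff, Subtype.val_inj, exists_eq_right]

theorem exists_optimal_primal_dual [Fintype J] [DecidableEq J] (c : J → κ → ℝ) {l u : κ → ℕ}
    (hlu : ∀ k ∈ B, l k ≤ u k) (hl : ∑ k ∈ B, l k ≤ Fintype.card J) :
    ∃ (y : J → κ → ℕ) (v w : κ → ℝ) (z : J → ℝ),
      ((∀ j, ∀ k ∈ B, y j k ≤ 1) ∧ (∀ k ∈ B, l k ≤ ∑ j, y j k ∧ ∑ j, y j k ≤ u k) ∧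
        ∀ j, ∑ k ∈ B, y j k ≤ 1) ∧
      (∀ k ∈ B, 0 ≤ v k) ∧ (∀ k ∈ B, 0 ≤ w k) ∧ (∀ j, 0 ≤ z j) ∧
      (∀ j, ∀ k ∈ B, c j k ≤ -v k + w k + z j) ∧
      ∑ j, ∑ k ∈ B, c j k * y j k = -∑ k ∈ B, l k * v k + ∑ k ∈ B, u k * w k + ∑ j, z j := by
  set c' : J → B → ℝ := fun j k => c j k
  obtain ⟨g, σ, hσ, hval⟩ := exists_assignment_eq_dualObj c' (l := fun k : B => l k)
    (u := fun k : B => u k) (fun k => hlu k k.2) (by rwa [sum_coe_sort B l])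
  set g' : κ → ℝ := fun k => if h : k ∈ B then g ⟨k, h⟩ else 0
  have hg' : ∀ k : B, g' k = g k := fun k => dif_pos k.2
  refine ⟨assignmentMatrix B σ, fun k => max (-g' k) 0, fun k => max (g' k) 0, slack c' g,
    ⟨fun j k _ => ?_, fun k hk => ?_, sum_assignmentMatrix_le_one σ⟩,
    fun _ _ => le_max_right _ _, fun _ _ => le_max_right _ _, slack_nonneg g, fun j k hk => ?_, ?_⟩
  · unfold assignmentMatrix; split_ifs <;> simp
  · rw [sum_assignmentMatrix_eq_load σ ⟨k, hk⟩]
    exact hσ ⟨k, hk⟩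
  · have := reducedCost_le_slack (c := c') g j (some ⟨k, hk⟩)
    rw [reducedCost_some, ← hg' ⟨k, hk⟩] at this
    linarith [max_zero_sub_eq_self (g' k)]
  · have hband : ∀ k : B, bandCost (l k) (u k) (g k) = u k * max (g' k) 0 - l k * max (-g' k) 0 :=
      fun k => by rw [bandCost_eq_sub (by exact_mod_cast hlu k k.2), hg']
    rw [sum_congr rfl fun j _ => sum_mul_assignmentMatrix _ σ j, hval, dualObj,
      sum_congr rfl fun k _ => hband k, sum_sub_distrib,
      sum_coe_sort B fun k => (u k : ℝ) * max (g' k) 0,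
      sum_coe_sort B fun k => (l k : ℝ) * max (-g' k) 0]
    ring

end Bands

theorem stmt_6_general (n : ℕ) (Km Kp : ℤ)
    (a : Fin n → ℝ) (b : ℝ)
    (d : Fin n → ℤ → ℝ)
    (l u : ℤ → ℕ)
    (hlu : ∀ k ∈ bands Km Kp, l k ≤ u k)
    (hl : ∑ k ∈ bands Km Kp, l k ≤ n)
    (x : Fin n → ℝ) :
    (∑ j : Fin n, a j * x j + DEV n Km Kp l u d x ≤ b) ↔
    (∃ (v w : ℤ → ℝ) (z : Fin n → ℝ),
      (∀ k ∈ bands Km Kp, 0 ≤ v k) ∧ (∀ k ∈ bands Km Kp, 0 ≤ w k) ∧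
      (∀ j : Fin n, 0 ≤ z j) ∧
      (∀ j : Fin n, ∀ k ∈ bands Km Kp, d j k * x j ≤ -v k + w k + z j) ∧
      ∑ j : Fin n, a j * x j - (∑ k ∈ bands Km Kp, (l k : ℝ) * v k)
        + (∑ k ∈ bands Km Kp, (u k : ℝ) * w k) + ∑ j : Fin n, z j ≤ b) := by
  have hweak : ∀ y, memY n Km Kp l u y → ∀ (v w : ℤ → ℝ) (z : Fin n → ℝ),
      (∀ k ∈ bands Km Kp, 0 ≤ v k) → (∀ k ∈ bands Km Kp, 0 ≤ w k) → (∀ j, 0 ≤ z j) →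
      (∀ j, ∀ k ∈ bands Km Kp, d j k * x j ≤ -v k + w k + z j) →
      ∑ j, ∑ k ∈ bands Km Kp, d j k * x j * (y j k : ℝ) ≤
        -∑ k ∈ bands Km Kp, (l k : ℝ) * v k + ∑ k ∈ bands Km Kp, (u k : ℝ) * w k + ∑ j, z j :=
    fun y ⟨_, hcol, hrow⟩ _ _ _ hv hw hz hc => sum_sum_mul_le_of_dual_feasible
      (fun _ _ _ => Nat.cast_nonneg _) (fun k hk => by exact_mod_cast hcol k hk)
      (fun j => by exact_mod_cast hrow j) hv hw hz hc
  obtain ⟨y, v, w, z, hy, hv, hw, hz, hc, hopt⟩ := exists_optimal_primal_dual (B := bands Km Kp)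
    (fun j k => d j k * x j) hlu (by simpa using hl)
  have hDEV : DEV n Km Kp l u d x = ∑ j, ∑ k ∈ bands Km Kp, d j k * x j * (y j k : ℝ) :=
    IsGreatest.csSup_eq ⟨⟨y, hy, rfl⟩, by
      rintro _ ⟨y', hy', rfl⟩
      exact (hweak y' hy' v w z hv hw hz hc).trans_eq hopt.symm⟩
  constructor
  · intro h
    exact ⟨v, w, z, hv, hw, hz, hc, by linarith⟩
  · rintro ⟨v', w', z', hv', hw', hz', hc', hb⟩
    linarith [hweak y hy v' w' z' hv' hw' hz' hc']

/-- for every `x ≥ 0`, the robust constraint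
`∑_j ā_{ij} x_j + DEV_i(x) ≤ b_i` holds iff there exist nonnegative dual multipliers
`v, w ∈ ℝ^K`, `z ∈ ℝ^J` with `-v_k + w_k + z_j ≥ d^k_{ij} x_j` for all `j, k` and
`∑_j ā_{ij} x_j - ∑_k l_k v_k + ∑_k u_k w_k + ∑_j z_j ≤ b_i`; this is the constraint-wise
equivalence between the robust counterpart and the compact linear program (RLP). -/
theorem stmt_6 (n : ℕ) (hn : 0 < n) (Km Kp : ℤ) (hKm : Km < 0) (hKp : 0 < Kp)
    (a : Fin n → ℝ) (b : ℝ)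
    (d : Fin n → ℤ → ℝ) (hd0 : ∀ j : Fin n, d j 0 = 0)
    (l u : ℤ → ℕ)
    (hlu : ∀ k ∈ bands Km Kp, l k ≤ u k)
    (hun : ∀ k ∈ bands Km Kp, u k ≤ n)
    (hu0 : u 0 = n)
    (hl : ∑ k ∈ bands Km Kp, l k ≤ n)
    (x : Fin n → ℝ) (hx : ∀ j, 0 ≤ x j) :
    (∑ j : Fin n, a j * x j + DEV n Km Kp l u d x ≤ b) ↔
    (∃ (v w : ℤ → ℝ) (z : Fin n → ℝ),
      (∀ k ∈ bands Km Kp, 0 ≤ v k) ∧ (∀ k ∈ bands Km Kp, 0 ≤ w k) ∧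
      (∀ j : Fin n, 0 ≤ z j) ∧
      (∀ j : Fin n, ∀ k ∈ bands Km Kp, d j k * x j ≤ -v k + w k + z j) ∧
      ∑ j : Fin n, a j * x j - (∑ k ∈ bands Km Kp, (l k : ℝ) * v k)
        + (∑ k ∈ bands Km Kp, (u k : ℝ) * w k) + ∑ j : Fin n, z j ≤ b) :=
  stmt_6_general n Km Kp a b d l u hlu hl x
end

section
/- For every x ∈ ℝ^n with x ≥ 0 and every feasible assignment y¹ ∈ Y_i, there exists an assignment y² ∈ Ȳ_i (i.e., y² ∈ Y_i with Σ_{j∈J} Σ_{k∈K} y²_{jk} = n) such that Σ_{j∈J} Σ_{k∈K} d^k_{ij} x_j y²_{jk} ≥ Σ_{j∈J} Σ_{k∈K} d^k_{ij} x_j y¹_{jk}. Consequently, max_{y∈Y_i} Σ_{j,k} d^k_{ij} x_j y_{jk} = max_{y∈Ȳ_i} Σ_{j,k} d^k_{ij} x_j y_{jk}. -/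
/-!
Given `y ∈ Y_i`, put every coefficient `j` that `y` leaves unassigned into the zero band.
Since `d^0_{ij} = 0` this does not change the total deviation, every row then sums to one, and
the zero band only grows, its upper bound `u_0 = n` being automatic. The two maxima agree
because each set of values dominates the other.
-/

open Finset

/-- `Ȳ_i`: feasible deviation assignments distributing all `n` coefficients among the bands. -/
def memYbar (n : ℕ) (Km Kp : ℤ) (l u : ℤ → ℕ) (y : Fin n → ℤ → ℕ) : Prop :=
  memY n Km Kp l u y ∧ ∑ j : Fin n, ∑ k ∈ bands Km Kp, y j k = n

section FillZero

variable {ι : Type*}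

def fillZero (K : Finset ℤ) (y : ι → ℤ → ℕ) (j : ι) : ℤ → ℕ :=
  Function.update (y j) 0 (1 - ∑ k ∈ K.erase 0, y j k)

theorem fillZero_of_ne {K : Finset ℤ} (y : ι → ℤ → ℕ) (j : ι) {k : ℤ} (hk : k ≠ 0) :
    fillZero K y j k = y j k :=
  Function.update_of_ne hk _ _

theorem fillZero_zero (K : Finset ℤ) (y : ι → ℤ → ℕ) (j : ι) :
    fillZero K y j 0 = 1 - ∑ k ∈ K.erase 0, y j k :=
  Function.update_self _ _ _

variable {K : Finset ℤ} {y : ι → ℤ → ℕ} {j : ι}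

theorem fillZero_le_one (hy : ∀ k ∈ K, y j k ≤ 1) {k : ℤ} (hk : k ∈ K) :
    fillZero K y j k ≤ 1 := by
  by_cases hk0 : k = 0
  · subst hk0
    rw [fillZero_zero]
    exact Nat.sub_le _ _
  · rw [fillZero_of_ne y j hk0]
    exact hy k hk

theorem le_fillZero_zero (h0 : 0 ∈ K) (hrow : ∑ k ∈ K, y j k ≤ 1) :
    y j 0 ≤ fillZero K y j 0 := by
  rw [← add_sum_erase K _ h0] at hrow
  rw [fillZero_zero]
  omega

theorem sum_fillZero (h0 : 0 ∈ K) (hrow : ∑ k ∈ K, y j k ≤ 1) :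
    ∑ k ∈ K, fillZero K y j k = 1 := by
  rw [← add_sum_erase K _ h0] at hrow ⊢
  have hrest : ∑ k ∈ K.erase 0, fillZero K y j k = ∑ k ∈ K.erase 0, y j k :=
    sum_congr rfl fun k hk => fillZero_of_ne y j (ne_of_mem_erase hk)
  rw [hrest, fillZero_zero]
  omega

def totalDeviation [Fintype ι] (K : Finset ℤ) (d : ι → ℤ → ℝ) (x : ι → ℝ) (y : ι → ℤ → ℕ) : ℝ :=
  ∑ j, ∑ k ∈ K, d j k * x j * (y j k : ℝ)

theorem totalDeviation_fillZero [Fintype ι] (d : ι → ℤ → ℝ) (hd0 : ∀ j, d j 0 = 0) (x : ι → ℝ) :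
    totalDeviation K d x (fillZero K y) = totalDeviation K d x y := by
  refine sum_congr rfl fun j _ => sum_congr rfl fun k _ => ?_
  by_cases hk0 : k = 0
  · simp only [hk0, hd0, zero_mul]
  · rw [fillZero_of_ne y j hk0]

end FillZero

theorem zero_mem_bands {Km Kp : ℤ} (hKm : Km ≤ 0) (hKp : 0 ≤ Kp) : (0 : ℤ) ∈ bands Km Kp :=
  mem_Icc.2 ⟨hKm, hKp⟩

theorem memYbar_fillZero {n : ℕ} {Km Kp : ℤ} {l u : ℤ → ℕ} (h0 : (0 : ℤ) ∈ bands Km Kp)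
    (hu0 : u 0 = n) {y : Fin n → ℤ → ℕ} (hy : memY n Km Kp l u y) :
    memYbar n Km Kp l u (fillZero (bands Km Kp) y) := by
  obtain ⟨hy01, hcol, hrow⟩ := hy
  have hrow' (j : Fin n) := sum_fillZero (y := y) (j := j) h0 (hrow j)
  refine ⟨⟨fun j k hk => fillZero_le_one (hy01 j) hk, fun k hk => ?_, fun j => (hrow' j).le⟩, ?_⟩
  · by_cases hk0 : k = 0
    · subst hk0
      refine ⟨(hcol 0 h0).1.trans (sum_le_sum fun j _ => le_fillZero_zero h0 (hrow j)), ?_⟩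
      calc ∑ j, fillZero (bands Km Kp) y j 0 ≤ ∑ _j : Fin n, 1 :=
            sum_le_sum fun j _ => fillZero_le_one (hy01 j) h0
        _ = u 0 := by simp [hu0]
    · simp only [fillZero_of_ne y _ hk0]
      exact hcol k hk
  · simp [hrow']

theorem stmt_8_general (n : ℕ) (Km Kp : ℤ) (hKm : Km < 0) (hKp : 0 < Kp)
    (d : Fin n → ℤ → ℝ) (hd0 : ∀ j : Fin n, d j 0 = 0)
    (l u : ℤ → ℕ)
    (hu0 : u 0 = n)
    (x : Fin n → ℝ) :
    (∀ y1 : Fin n → ℤ → ℕ, memY n Km Kp l u y1 →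
      ∃ y2 : Fin n → ℤ → ℕ, memYbar n Km Kp l u y2 ∧
        ∑ j : Fin n, ∑ k ∈ bands Km Kp, d j k * x j * (y1 j k : ℝ) ≤
        ∑ j : Fin n, ∑ k ∈ bands Km Kp, d j k * x j * (y2 j k : ℝ)) ∧
    sSup {v : ℝ | ∃ y : Fin n → ℤ → ℕ, memY n Km Kp l u y ∧
        v = ∑ j : Fin n, ∑ k ∈ bands Km Kp, d j k * x j * (y j k : ℝ)}
      =
    sSup {v : ℝ | ∃ y : Fin n → ℤ → ℕ, memYbar n Km Kp l u y ∧
        v = ∑ j : Fin n, ∑ k ∈ bands Km Kp, d j k * x j * (y j k : ℝ)} := by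
  have h0 := zero_mem_bands hKm.le hKp.le
  have dominated (y1 : Fin n → ℤ → ℕ) (hy1 : memY n Km Kp l u y1) :
      ∃ y2, memYbar n Km Kp l u y2 ∧
        totalDeviation (bands Km Kp) d x y1 ≤ totalDeviation (bands Km Kp) d x y2 :=
    ⟨_, memYbar_fillZero h0 hu0 hy1, (totalDeviation_fillZero d hd0 x).ge⟩
  refine ⟨dominated, csSup_eq_csSup_of_forall_exists_le ?_ ?_⟩
  · rintro _ ⟨y1, hy1, rfl⟩
    obtain ⟨y2, hy2, hle⟩ := dominated y1 hy1
    exact ⟨_, ⟨y2, hy2, rfl⟩, hle⟩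
  · rintro _ ⟨y2, hy2, rfl⟩
    exact ⟨_, ⟨y2, hy2.1, rfl⟩, le_rfl⟩

/-- for every `x ≥ 0` and every `y¹ ∈ Y_i` there is `y² ∈ Ȳ_i` with at least the
same total deviation; consequently the maximum total deviation over `Y_i` equals the maximum
over `Ȳ_i`. -/
theorem stmt_8 (n : ℕ) (hn : 0 < n) (Km Kp : ℤ) (hKm : Km < 0) (hKp : 0 < Kp)
    (d : Fin n → ℤ → ℝ) (hd0 : ∀ j : Fin n, d j 0 = 0)
    (l u : ℤ → ℕ)
    (hlu : ∀ k ∈ bands Km Kp, l k ≤ u k)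
    (hun : ∀ k ∈ bands Km Kp, u k ≤ n)
    (hu0 : u 0 = n)
    (hl : ∑ k ∈ bands Km Kp, l k ≤ n)
    (x : Fin n → ℝ) (hx : ∀ j, 0 ≤ x j) :
    (∀ y1 : Fin n → ℤ → ℕ, memY n Km Kp l u y1 →
      ∃ y2 : Fin n → ℤ → ℕ, memYbar n Km Kp l u y2 ∧
        ∑ j : Fin n, ∑ k ∈ bands Km Kp, d j k * x j * (y1 j k : ℝ) ≤
        ∑ j : Fin n, ∑ k ∈ bands Km Kp, d j k * x j * (y2 j k : ℝ)) ∧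
    sSup {v : ℝ | ∃ y : Fin n → ℤ → ℕ, memY n Km Kp l u y ∧
        v = ∑ j : Fin n, ∑ k ∈ bands Km Kp, d j k * x j * (y j k : ℝ)}
      =
    sSup {v : ℝ | ∃ y : Fin n → ℤ → ℕ, memYbar n Km Kp l u y ∧
        v = ∑ j : Fin n, ∑ k ∈ bands Km Kp, d j k * x j * (y j k : ℝ)} :=
  stmt_8_general n Km Kp hKm hKp d hd0 l u hu0 x
end

section
/- For every x ∈ ℝ^n with x ≥ 0 and every assignment y ∈ Ȳ_i, there exists a feasible integral flow f of value n in the instance (G,c)^i_x whose cost satisfies c(f) = −Σ_{j∈J} Σ_{k∈K} d^k_{ij} x_j y_{jk}; explicitly, setting f(s,v_j) = 1 for all j ∈ J, f(v_j,w_k) = y_{jk} for all j ∈ J, k ∈ K, and f(w_k,t) = Σ_{j∈J} y_{jk} for all k ∈ K yields such a flow. -/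
open Finset

/-- A feasible integral flow of value `n` in the min-cost flow instance `(G,c)ⁱₓ`:
`fs j` is the flow on arc `(s, v_j)` (bounds `[0,1]`), `fm j k` is the flow on arc
`(v_j, w_k)` (bounds `[0,1]`), and `ft k` is the flow on arc `(w_k, t)` (bounds `[l_k, u_k]`);
flow conservation holds at every vertex `v_j` and `w_k`, and the flow value is `n`. -/
def IsFlow (n : ℕ) (Km Kp : ℤ) (l u : ℤ → ℕ)
    (fs : Fin n → ℕ) (fm : Fin n → ℤ → ℕ) (ft : ℤ → ℕ) : Prop :=
  (∀ j : Fin n, fs j ≤ 1) ∧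
  (∀ j : Fin n, ∀ k ∈ bands Km Kp, fm j k ≤ 1) ∧
  (∀ k ∈ bands Km Kp, l k ≤ ft k ∧ ft k ≤ u k) ∧
  (∀ j : Fin n, fs j = ∑ k ∈ bands Km Kp, fm j k) ∧
  (∀ k ∈ bands Km Kp, ∑ j : Fin n, fm j k = ft k) ∧
  (∑ j : Fin n, fs j = n)

/-- The cost `c(f) = ∑_j ∑_k (-d^k_{ij} x_j) f(v_j, w_k)` of a flow (only the middle arcs
have nonzero cost). -/
noncomputable def flowCost (n : ℕ) (Km Kp : ℤ) (d : Fin n → ℤ → ℝ) (x : Fin n → ℝ)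
    (fm : Fin n → ℤ → ℕ) : ℝ :=
  ∑ j : Fin n, ∑ k ∈ bands Km Kp, -(d j k * x j) * (fm j k : ℝ)

theorem Finset.eq_one_of_le_one_of_sum_eq_card {ι : Type*} {s : Finset ι} {f : ι → ℕ}
    (hle : ∀ i ∈ s, f i ≤ 1) (hsum : ∑ i ∈ s, f i = #s) : ∀ i ∈ s, f i = 1 := by
  rw [card_eq_sum_ones] at hsum
  exact (sum_eq_sum_iff_of_le hle).mp hsum

theorem memYbar.sum_bands_eq_one {n : ℕ} {Km Kp : ℤ} {l u : ℤ → ℕ} {y : Fin n → ℤ → ℕ}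
    (hy : memYbar n Km Kp l u y) (j : Fin n) : ∑ k ∈ bands Km Kp, y j k = 1 := by
  obtain ⟨⟨-, -, hrow⟩, htotal⟩ := hy
  refine eq_one_of_le_one_of_sum_eq_card (fun j _ => hrow j) ?_ j (mem_univ j)
  simpa using htotal

theorem memYbar.isFlow {n : ℕ} {Km Kp : ℤ} {l u : ℤ → ℕ} {y : Fin n → ℤ → ℕ}
    (hy : memYbar n Km Kp l u y) :
    IsFlow n Km Kp l u (fun _ => 1) y (fun k => ∑ j : Fin n, y j k) :=
  ⟨fun _ => le_rfl, hy.1.1, hy.1.2.1, fun j => (hy.sum_bands_eq_one j).symm,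
    fun _ _ => rfl, by simp⟩

theorem flowCost_eq_neg_sum (n : ℕ) (Km Kp : ℤ) (d : Fin n → ℤ → ℝ) (x : Fin n → ℝ)
    (fm : Fin n → ℤ → ℕ) :
    flowCost n Km Kp d x fm = -(∑ j : Fin n, ∑ k ∈ bands Km Kp, d j k * x j * (fm j k : ℝ)) := by
  simp only [flowCost, neg_mul, sum_neg_distrib]

theorem stmt_9_general (n : ℕ) (Km Kp : ℤ)
    (d : Fin n → ℤ → ℝ)
    (l u : ℤ → ℕ)
    (x : Fin n → ℝ)
    (y : Fin n → ℤ → ℕ) (hy : memYbar n Km Kp l u y) :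
    IsFlow n Km Kp l u (fun _ => 1) y (fun k => ∑ j : Fin n, y j k) ∧
    flowCost n Km Kp d x y
      = -(∑ j : Fin n, ∑ k ∈ bands Km Kp, d j k * x j * (y j k : ℝ)) :=
  ⟨hy.isFlow, flowCost_eq_neg_sum n Km Kp d x y⟩

/-- for every `x ≥ 0` and every `y ∈ Ȳ_i`, setting `f(s,v_j) = 1`,
`f(v_j,w_k) = y_{jk}` and `f(w_k,t) = ∑_j y_{jk}` yields a feasible integral flow of value `n`
in `(G,c)ⁱₓ` whose cost is `-∑_j ∑_k d^k_{ij} x_j y_{jk}`. -/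
theorem stmt_9 (n : ℕ) (hn : 0 < n) (Km Kp : ℤ) (hKm : Km < 0) (hKp : 0 < Kp)
    (d : Fin n → ℤ → ℝ) (hd0 : ∀ j : Fin n, d j 0 = 0)
    (l u : ℤ → ℕ)
    (hlu : ∀ k ∈ bands Km Kp, l k ≤ u k)
    (hun : ∀ k ∈ bands Km Kp, u k ≤ n)
    (hu0 : u 0 = n)
    (hl : ∑ k ∈ bands Km Kp, l k ≤ n)
    (x : Fin n → ℝ) (hx : ∀ j, 0 ≤ x j)
    (y : Fin n → ℤ → ℕ) (hy : memYbar n Km Kp l u y) :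
    IsFlow n Km Kp l u (fun _ => 1) y (fun k => ∑ j : Fin n, y j k) ∧
    flowCost n Km Kp d x y
      = -(∑ j : Fin n, ∑ k ∈ bands Km Kp, d j k * x j * (y j k : ℝ)) :=
  stmt_9_general n Km Kp d l u x y hy
end

section
/- For every x ∈ ℝ^n with x ≥ 0 and every feasible integral flow f of value n in the instance (G,c)^i_x, the assignment y defined by y_{jk} = f(v_j,w_k) for j ∈ J, k ∈ K belongs to Ȳ_i and satisfies Σ_{j∈J} Σ_{k∈K} d^k_{ij} x_j y_{jk} = −c(f). -/
open Finset

namespace IsFlow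

variable {n : ℕ} {Km Kp : ℤ} {l u : ℤ → ℕ} {fs : Fin n → ℕ} {fm : Fin n → ℤ → ℕ} {ft : ℤ → ℕ}

theorem memY (hf : IsFlow n Km Kp l u fs fm ft) : memY n Km Kp l u fm := by
  obtain ⟨hs, hm, ht, hv, hw, -⟩ := hf
  refine ⟨hm, fun k hk => ?_, fun j => ?_⟩
  · rw [hw k hk]
    exact ht k hk
  · rw [← hv j]
    exact hs j

theorem sum_sum_middle (hf : IsFlow n Km Kp l u fs fm ft) :
    ∑ j : Fin n, ∑ k ∈ bands Km Kp, fm j k = n := by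
  obtain ⟨-, -, -, hv, -, hval⟩ := hf
  simp_rw [← hv]
  exact hval

theorem memYbar (hf : IsFlow n Km Kp l u fs fm ft) : memYbar n Km Kp l u fm :=
  ⟨hf.memY, hf.sum_sum_middle⟩

end IsFlow

theorem neg_flowCost (n : ℕ) (Km Kp : ℤ) (d : Fin n → ℤ → ℝ) (x : Fin n → ℝ)
    (fm : Fin n → ℤ → ℕ) :
    -flowCost n Km Kp d x fm = ∑ j : Fin n, ∑ k ∈ bands Km Kp, d j k * x j * (fm j k : ℝ) := by
  simp only [flowCost, neg_mul, Finset.sum_neg_distrib, neg_neg]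

theorem stmt_10_general (n : ℕ) (Km Kp : ℤ) (d : Fin n → ℤ → ℝ) (l u : ℤ → ℕ) (x : Fin n → ℝ)
    (fs : Fin n → ℕ) (fm : Fin n → ℤ → ℕ) (ft : ℤ → ℕ)
    (hf : IsFlow n Km Kp l u fs fm ft) :
    memYbar n Km Kp l u fm ∧
    ∑ j : Fin n, ∑ k ∈ bands Km Kp, d j k * x j * (fm j k : ℝ)
      = -(flowCost n Km Kp d x fm) :=
  ⟨hf.memYbar, (neg_flowCost n Km Kp d x fm).symm⟩

/-- for every `x ≥ 0` and every feasible integral flow `f` of value `n` in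
`(G,c)ⁱₓ`, the assignment `y_{jk} := f(v_j, w_k)` belongs to `Ȳ_i` and its total deviation
equals `-c(f)`. -/
theorem stmt_10 (n : ℕ) (hn : 0 < n) (Km Kp : ℤ) (hKm : Km < 0) (hKp : 0 < Kp)
    (d : Fin n → ℤ → ℝ) (hd0 : ∀ j : Fin n, d j 0 = 0)
    (l u : ℤ → ℕ)
    (hlu : ∀ k ∈ bands Km Kp, l k ≤ u k)
    (hun : ∀ k ∈ bands Km Kp, u k ≤ n)
    (hu0 : u 0 = n)
    (hl : ∑ k ∈ bands Km Kp, l k ≤ n)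
    (x : Fin n → ℝ) (hx : ∀ j, 0 ≤ x j)
    (fs : Fin n → ℕ) (fm : Fin n → ℤ → ℕ) (ft : ℤ → ℕ)
    (hf : IsFlow n Km Kp l u fs fm ft) :
    memYbar n Km Kp l u fm ∧
    ∑ j : Fin n, ∑ k ∈ bands Km Kp, d j k * x j * (fm j k : ℝ)
      = -(flowCost n Km Kp d x fm) :=
  stmt_10_general n Km Kp d l u x fs fm ft hf
end
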